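/- arXiv:0903.1908 — 9 statements merged into one kernel-verified Lean document; each statement's English description precedes it below -/
import Mathlib

section
/- Let n ≥ 1 and let f : [a,b] → ℝ be continuous, not identically zero, and suppose that the first n moments of f vanish: ∫_a^b x^k f(x) dx = 0 for k = 0, 1, …, n−1. Then f changes sign at least n times in (a,b); that is, there exist points x₀ < x₁ < ⋯ < x_n in (a,b) with f(x_{i−1})·f(x_i) < 0 for every i = 1, …, n. -/
/-!
Induction on `n`. Put `F x = ∫ t in a..x, f t`. The vanishing zeroth moment gives `F a = F b = 0`,
and integration by parts turns the `(k+1)`-st moment of `f` into `-(k+1)` times the `k`-th moment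
of `F`, so `F` has `n - 1` vanishing moments; `F ≢ 0` on `(a,b)` because `F' = f`. By induction `F`
alternates in sign at `x₀ < ⋯ < x_{n-1}`, so the increments of `F` over the `n + 1` intervals cut
out of `[a,b]` by these points alternate too, and the mean value theorem turns them into points
where `f = F'` alternates.
-/

open Set

theorem sub_mul_sub_neg_of_mul_nonpos {α : Type*} [CommRing α] [LinearOrder α]
    [IsStrictOrderedRing α] {u v w : α} (hv : v ≠ 0) (huv : u * v ≤ 0) (hvw : v * w ≤ 0) :
    (v - u) * (w - v) < 0 := by
  rcases hv.lt_or_gt with hv | hv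
  · exact mul_neg_of_neg_of_pos (by nlinarith) (by nlinarith)
  · exact mul_neg_of_pos_of_neg (by nlinarith) (by nlinarith)

section Alternates

variable {α : Type*} [Field α] [LinearOrder α] [IsStrictOrderedRing α]

def Alternates {n : ℕ} (d : Fin (n + 1) → α) : Prop :=
  (∀ i, d i ≠ 0) ∧ ∀ i : Fin n, d i.castSucc * d i.succ < 0

theorem Alternates.div {n : ℕ} {d c : Fin (n + 1) → α} (hd : Alternates d)
    (hc : ∀ i, 0 < c i) : Alternates fun i ↦ d i / c i := by
  refine ⟨fun i ↦ div_ne_zero (hd.1 i) (hc i).ne', fun i ↦ ?_⟩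
  rw [div_mul_div_comm]
  exact div_neg_of_neg_of_pos (hd.2 i) (mul_pos (hc _) (hc _))

theorem Alternates.sub_cons_snoc_zero {n : ℕ} {v : Fin (n + 1) → α} (hv : Alternates v) :
    Alternates fun i : Fin (n + 2) ↦
      (Fin.cons 0 (Fin.snoc v 0) : Fin (n + 3) → α) i.succ
        - (Fin.cons 0 (Fin.snoc v 0) : Fin (n + 3) → α) i.castSucc := by
  set w : Fin (n + 3) → α := Fin.cons 0 (Fin.snoc v 0)
  have hleft : ∀ k : Fin (n + 1), w k.castSucc.castSucc * v k ≤ 0 := by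
    refine Fin.cases (by simp [w]) (fun j ↦ ?_)
    simpa [w, ← Fin.succ_castSucc] using (hv.2 j).le
  have hright : ∀ k : Fin (n + 1), v k * w k.succ.succ ≤ 0 := by
    refine Fin.lastCases (by simp [w]) (fun j ↦ ?_)
    rw [Fin.succ_castSucc]
    simpa only [w, Fin.cons_succ, Fin.snoc_castSucc] using (hv.2 j).le
  have hpair : ∀ k : Fin (n + 1),
      (w k.castSucc.succ - w k.castSucc.castSucc) * (w k.succ.succ - w k.succ.castSucc) < 0 := by
    intro k
    have hk : w k.castSucc.succ = v k := by simp [w]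
    rw [← Fin.succ_castSucc, hk]
    exact sub_mul_sub_neg_of_mul_nonpos (hv.1 k) (hleft k) (hright k)
  refine ⟨Fin.lastCases ?_ (fun k ↦ left_ne_zero_of_mul (hpair k).ne), hpair⟩
  exact right_ne_zero_of_mul (hpair (Fin.last n)).ne

end Alternates

/-- `Alternates` also asks `f (x i) ≠ 0`; beyond the product condition this matters only for
`n = 0`, where it is what lets the induction start. -/
def ChangesSignAtLeast (f : ℝ → ℝ) (s : Set ℝ) (n : ℕ) : Prop :=
  ∃ x : Fin (n + 1) → ℝ, StrictMono x ∧ (∀ i, x i ∈ s) ∧ Alternates (f ∘ x)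

section SignChanges

variable {F f : ℝ → ℝ} {a b : ℝ} {n : ℕ}

theorem changesSignAtLeast_of_hasDerivAt_of_alternates_sub (hF : ContinuousOn F (Icc a b))
    (hF' : ∀ x ∈ Ioo a b, HasDerivAt F (f x) x) {z : Fin (n + 2) → ℝ} (hz : StrictMono z)
    (hzab : ∀ i, z i ∈ Icc a b)
    (hFz : Alternates fun i : Fin (n + 1) ↦ F (z i.succ) - F (z i.castSucc)) :
    ChangesSignAtLeast f (Ioo a b) n := by
  have hslope : ∀ i : Fin (n + 1), ∃ y ∈ Ioo (z i.castSucc) (z i.succ),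
      f y = (F (z i.succ) - F (z i.castSucc)) / (z i.succ - z i.castSucc) := fun i ↦
    exists_hasDerivAt_eq_slope F f (hz Fin.castSucc_lt_succ)
      (hF.mono (Icc_subset_Icc (hzab _).1 (hzab _).2))
      fun x hx ↦ hF' x (Ioo_subset_Ioo (hzab _).1 (hzab _).2 hx)
  choose y hy hfy using hslope
  refine ⟨y, Fin.strictMono_iff_lt_succ.2 fun i ↦ ?_, fun i ↦ ?_, ?_⟩
  · calc y i.castSucc < z i.castSucc.succ := (hy _).2
      _ = z i.succ.castSucc := by rw [Fin.succ_castSucc]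
      _ < y i.succ := (hy _).1
  · exact ⟨(hzab _).1.trans_lt (hy i).1, (hy i).2.trans_le (hzab _).2⟩
  · have := hFz.div fun i ↦ sub_pos.2 (hz (Fin.castSucc_lt_succ (i := i)))
    simpa only [Function.comp_def, hfy] using this

theorem ChangesSignAtLeast.succ_of_hasDerivAt (h : ChangesSignAtLeast F (Ioo a b) n)
    (hF : ContinuousOn F (Icc a b)) (hF' : ∀ x ∈ Ioo a b, HasDerivAt F (f x) x)
    (ha : F a = 0) (hb : F b = 0) : ChangesSignAtLeast f (Ioo a b) (n + 1) := by
  obtain ⟨x, hx, hxab, hFx⟩ := h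
  set z : Fin (n + 3) → ℝ := Fin.cons a (Fin.snoc x b)
  have hz : StrictMono z := by
    rw [Fin.strictMono_cons, ← Fin.insertNth_last', Fin.strictMono_insertNth_iff]
    refine ⟨Fin.lastCases (by simpa using (hxab 0).1.trans (hxab 0).2)
      fun i ↦ by simpa using (hxab i).1, hx, fun i _ ↦ (hxab i).2, fun i hi ↦ absurd hi (by simp)⟩
  have hFz : F ∘ z = Fin.cons 0 (Fin.snoc (F ∘ x) 0) := by
    rw [Fin.comp_cons, Fin.comp_snoc, ha, hb]
  refine changesSignAtLeast_of_hasDerivAt_of_alternates_sub hF hF' hz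
    (fun i ↦ ⟨hz.monotone (Fin.zero_le i), by simpa [z] using hz.monotone (Fin.le_last i)⟩) ?_
  simpa only [← Function.comp_apply (f := F), hFz] using hFx.sub_cons_snoc_zero

theorem integral_pow_mul_primitive (hf : Continuous f) (h0 : ∫ x in a..b, f x = 0) (k : ℕ) :
    (k + 1) * ∫ x in a..b, x ^ k * ∫ t in a..x, f t = -∫ x in a..b, x ^ (k + 1) * f x := by
  have hparts := intervalIntegral.integral_mul_deriv_eq_deriv_mul
    (u := fun x ↦ x ^ (k + 1)) (u' := fun x ↦ (k + 1) * x ^ k)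
    (v := fun x ↦ ∫ t in a..x, f t) (v' := f)
    (fun x _ ↦ by simpa using hasDerivAt_pow (k + 1) x)
    (fun x _ ↦ (hf.integral_hasStrictDerivAt a x).hasDerivAt)
    ((continuous_const.mul (continuous_pow k)).intervalIntegrable a b)
    (hf.intervalIntegrable a b)
  simp only [h0, intervalIntegral.integral_same, mul_zero, sub_zero, zero_sub] at hparts
  rw [hparts, ← intervalIntegral.integral_const_mul]
  simp only [mul_assoc, neg_neg]

theorem changesSignAtLeast_of_moments_eq_zero (hf : Continuous f)
    (hne : ∃ x ∈ Ioo a b, f x ≠ 0) (hmom : ∀ k < n, ∫ x in a..b, x ^ k * f x = 0) :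
    ChangesSignAtLeast f (Ioo a b) n := by
  induction n generalizing f with
  | zero =>
    obtain ⟨x, hx, hfx⟩ := hne
    exact ⟨fun _ ↦ x, Fin.strictMono_iff_lt_succ.2 Fin.elim0, fun _ ↦ hx, fun _ ↦ hfx,
      fun i ↦ i.elim0⟩
  | succ n ih =>
    set F := fun x ↦ ∫ t in a..x, f t
    have hF' : ∀ x, HasDerivAt F (f x) x := fun x ↦
      (hf.integral_hasStrictDerivAt a x).hasDerivAt
    have hFc : Continuous F := continuous_iff_continuousAt.2 fun x ↦ (hF' x).continuousAt
    have hFb : F b = 0 := by simpa using hmom 0 n.succ_pos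
    refine (ih hFc ?_ fun k hk ↦ ?_).succ_of_hasDerivAt hFc.continuousOn (fun x _ ↦ hF' x)
      intervalIntegral.integral_same hFb
    · obtain ⟨p, hp, hfp⟩ := hne
      by_contra! hF0
      have hF0' : HasDerivAt F 0 p := (hasDerivAt_const p 0).congr_of_eventuallyEq
        (Filter.mem_of_superset (Ioo_mem_nhds hp.1 hp.2) hF0)
      exact hfp ((hF' p).unique hF0')
    · have := integral_pow_mul_primitive hf hFb k
      rw [hmom (k + 1) (by omega), neg_zero] at this
      exact (mul_eq_zero.1 this).resolve_left (by positivity)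

end SignChanges

theorem moments_vanish_sign_changes_general
    (n : ℕ) (a b : ℝ) (hab : a < b) (f : ℝ → ℝ)
    (hf : ContinuousOn f (Set.Icc a b))
    (hne : ∃ x ∈ Set.Icc a b, f x ≠ 0)
    (hmom : ∀ k < n, ∫ x in a..b, x ^ k * f x = 0) :
    ∃ x : Fin (n + 1) → ℝ, StrictMono x ∧ (∀ i, x i ∈ Set.Ioo a b) ∧
      ∀ i : Fin n, f (x i.castSucc) * f (x i.succ) < 0 := by
  set g := IccExtend hab.le (domRestrict (Icc a b) f)
  have hgf : EqOn g f (Icc a b) := fun x hx ↦ IccExtend_of_mem _ _ hx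
  have hg : Continuous g := (continuousOn_iff_continuous_domRestrict.1 hf).Icc_extend'
  have hgne : ∃ x ∈ Ioo a b, g x ≠ 0 := by
    obtain ⟨p, hp, hfp⟩ := hne
    by_contra! hg0
    have hg0' : EqOn g 0 (Icc a b) := closure_Ioo hab.ne ▸ EqOn.closure hg0 hg continuous_const
    exact hfp (hgf hp ▸ hg0' hp)
  have hgmom : ∀ k < n, ∫ x in a..b, x ^ k * g x = 0 := fun k hk ↦ by
    rw [← hmom k hk]
    refine intervalIntegral.integral_congr fun x hx ↦ ?_
    rw [uIcc_of_le hab.le] at hx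
    simp only [hgf hx]
  obtain ⟨x, hx, hxab, -, halt⟩ := changesSignAtLeast_of_moments_eq_zero hg hgne hgmom
  refine ⟨x, hx, hxab, fun i ↦ ?_⟩
  simpa only [Function.comp_apply, hgf (Ioo_subset_Icc_self (hxab _))] using halt i

/-- If `f` is continuous on `[a,b]`, not identically zero, and its first `n` moments
vanish, then `f` changes sign at least `n` times in `(a,b)`. -/
theorem moments_vanish_sign_changes
    (n : ℕ) (hn : 1 ≤ n) (a b : ℝ) (hab : a < b) (f : ℝ → ℝ)
    (hf : ContinuousOn f (Set.Icc a b))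
    (hne : ∃ x ∈ Set.Icc a b, f x ≠ 0)
    (hmom : ∀ k < n, ∫ x in a..b, x ^ k * f x = 0) :
    ∃ x : Fin (n + 1) → ℝ, StrictMono x ∧ (∀ i, x i ∈ Set.Ioo a b) ∧
      ∀ i : Fin n, f (x i.castSucc) * f (x i.succ) < 0 :=
  moments_vanish_sign_changes_general n a b hab f hf hne hmom
end

section
/- (Hurwitz) Let n ≥ 1 and let f : ℝ → ℝ be continuous and 2π-periodic, not identically zero, and suppose its first n harmonics vanish: ∫_0^{2π} f(x) dx = 0 and ∫_0^{2π} f(x)·cos(kx) dx = ∫_0^{2π} f(x)·sin(kx) dx = 0 for k = 1, …, n. Then on every interval of length greater than 2π the function f changes sign at least 2n+1 times; that is, for every c ∈ ℝ and ℓ > 2π there exist points c < x₀ < x₁ < ⋯ < x_{2n+1} < c + ℓ with f(x_{i−1})·f(x_i) < 0 for every i. -/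
/-!
If `f` changed sign at most `2n` times on a closed period `[a, a + 2π]`, there would be an even
number `2p ≤ 2n` of points `lⱼ` in it such that `f x * ∏ (lⱼ - x)` has constant sign there (if the
count is odd, add the endpoint `a + 2π`). Since `sin ((l - x) / 2)` has the sign of `l - x` for
`|l - x| ≤ 2π`, the same holds for `g x = ∏ sin ((lⱼ - x) / 2)`, and `g` is a trigonometric
polynomial of degree `p ≤ n`: a product of two such sines is affine in `cos x` and `sin x`.
So `∫ f g = 0` over a period forces `f g ≡ 0` and then `f ≡ 0`. The period is chosen inside the
given interval of length `ℓ > 2π`.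
-/

open Real Set

namespace Hurwitz

/-- `SignChain b g m x`: there are `x = x₀ < x₁ < ⋯ < x_m ≤ b` at which `g` takes nonzero values
of alternating signs, starting with `g x₀ < 0`. -/
def SignChain (b : ℝ) : (ℝ → ℝ) → ℕ → ℝ → Prop
  | g, 0, x => g x < 0 ∧ x ≤ b
  | g, m + 1, x => g x < 0 ∧ ∃ y, x ≤ y ∧ SignChain b (-g) m y

variable {b : ℝ}

theorem SignChain.apply_neg {g : ℝ → ℝ} {m : ℕ} {x : ℝ} (h : SignChain b g m x) : g x < 0 := by
  cases m <;> exact h.1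

theorem SignChain.exists_strictMono {g : ℝ → ℝ} {m : ℕ} {a x : ℝ} (hax : a ≤ x)
    (h : SignChain b g m x) :
    ∃ y : Fin (m + 1) → ℝ, y 0 = x ∧ StrictMono y ∧ (∀ i, y i ∈ Icc a b) ∧
      ∀ i : Fin m, g (y i.castSucc) * g (y i.succ) < 0 := by
  induction m generalizing g a x with
  | zero => exact ⟨fun _ => x, rfl, Subsingleton.strictMono (α := Fin 1) _,
      fun _ => ⟨hax, h.2⟩, Fin.elim0⟩
  | succ m ih =>
    obtain ⟨hgx, y, hxy, hy⟩ := h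
    obtain ⟨z, rfl, hz, hzI, hzg⟩ := ih (hax.trans hxy) hy
    have hgz : 0 < g (z 0) := by simpa using hy.apply_neg
    have hxz : x < z 0 := lt_of_le_of_ne hxy fun h => by rw [h] at hgx; linarith
    refine ⟨Fin.cons x z, rfl, Fin.strictMono_iff_lt_succ.2 fun i => ?_, fun i => ?_,
      fun i => ?_⟩
    · cases i using Fin.cases with
      | zero => simpa using hxz
      | succ i => simpa using hz (Fin.castSucc_lt_succ (i := i))
    · cases i using Fin.cases with
      | zero => exact ⟨hax, hxy.trans (hzI 0).2⟩
      | succ i => simpa using hzI i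
    · cases i using Fin.cases with
      | zero => simpa using mul_neg_of_neg_of_pos hgx hgz
      | succ i => simpa using hzg i

theorem exists_nonneg_mul_prod_of_not_signChain {g : ℝ → ℝ} {a : ℝ} (m : ℕ)
    (hg : ContinuousOn g (Icc a b)) (hchain : ∀ x, a ≤ x → ¬ SignChain b g m x) :
    ∃ L : List ℝ, L.length ≤ m ∧ (∀ l ∈ L, l ∈ Icc a b) ∧
      ∀ x ∈ Icc a b, 0 ≤ g x * (L.map (· - x)).prod := by
  induction m generalizing g a with
  | zero =>
    refine ⟨[], le_rfl, by simp, fun x hx => ?_⟩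
    simpa using not_lt.1 fun hgx => hchain x hx.1 ⟨hgx, hx.2⟩
  | succ m ih =>
    by_cases hnonneg : ∀ x ∈ Icc a b, 0 ≤ g x
    · exact ⟨[], by simp, by simp, by simpa using hnonneg⟩
    push Not at hnonneg
    set S := {x ∈ Icc a b | g x < 0}
    have hS : S.Nonempty := hnonneg
    have hSbdd : BddBelow S := ⟨a, fun x hx => hx.1.1⟩
    -- `τ` is where `g` first becomes negative; a chain of `-g` beyond `τ` extends to the left by
    -- a negative value of `g` just after `τ`.
    set τ := sInf S
    have hτ : τ ∈ Icc a b ∩ g ⁻¹' Iic 0 :=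
      closure_minimal (fun _ hx => ⟨hx.1, le_of_lt hx.2⟩ : S ⊆ Icc a b ∩ g ⁻¹' Iic 0)
        (hg.preimage_isClosed_of_isClosed isClosed_Icc isClosed_Iic) (csInf_mem_closure hS hSbdd)
    have hleft : ∀ x ∈ Icc a b, x < τ → 0 ≤ g x := fun x hx hxτ =>
      not_lt.1 fun hgx => not_lt.2 (csInf_le hSbdd ⟨hx, hgx⟩) hxτ
    have hright : ∀ y, τ ≤ y → ¬ SignChain b (-g) m y := by
      intro y hτy hy
      have hgy : 0 < g y := by simpa using hy.apply_neg
      obtain ⟨w, hwS, hwy⟩ := exists_lt_of_csInf_lt hS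
        (lt_of_le_of_ne hτy fun h => not_lt.2 (h ▸ hτ.2 : g y ≤ 0) hgy)
      exact hchain w hwS.1.1 ⟨hwS.2, y, hwy.le, hy⟩
    obtain ⟨L, hlen, hL, hsign⟩ :=
      ih (hg.neg.mono (Icc_subset_Icc_left hτ.1.1)) hright
    refine ⟨τ :: L, by simpa using hlen, ?_, fun x hx => ?_⟩
    · simp only [List.mem_cons, forall_eq_or_imp]
      exact ⟨hτ.1, fun l hl => Icc_subset_Icc_left hτ.1.1 (hL l hl)⟩
    rw [List.map_cons, List.prod_cons]
    rcases lt_or_ge x τ with hxτ | hτx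
    · have hprod : 0 ≤ (L.map (· - x)).prod :=
        List.prod_nonneg fun _ hc => by
          obtain ⟨l, hl, rfl⟩ := List.mem_map.1 hc
          linarith [(hL l hl).1]
      exact mul_nonneg (hleft x hx hxτ) (mul_nonneg (by linarith) hprod)
    · have hneg := hsign x ⟨hτx, hx.2⟩
      simp only [Pi.neg_apply] at hneg
      linarith [mul_nonneg (sub_nonneg.2 hτx) hneg]

theorem exists_nonneg_const_mul_prod_of_not_signChain {g : ℝ → ℝ} {a : ℝ} (m : ℕ)
    (hg : ContinuousOn g (Icc a b))
    (hchain : ∀ x, a ≤ x → ¬ SignChain b g (m + 1) x ∧ ¬ SignChain b (-g) (m + 1) x) :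
    ∃ L : List ℝ, ∃ ε : ℝ, ε ≠ 0 ∧ L.length ≤ m ∧ (∀ l ∈ L, l ∈ Icc a b) ∧
      ∀ x ∈ Icc a b, 0 ≤ ε * g x * (L.map (· - x)).prod := by
  by_cases hpos : ∀ x, a ≤ x → ¬ SignChain b g m x
  · obtain ⟨L, hlen, hL, hsign⟩ := exists_nonneg_mul_prod_of_not_signChain m hg hpos
    exact ⟨L, 1, one_ne_zero, hlen, hL, by simpa using hsign⟩
  by_cases hneg : ∀ x, a ≤ x → ¬ SignChain b (-g) m x
  · obtain ⟨L, hlen, hL, hsign⟩ := exists_nonneg_mul_prod_of_not_signChain m hg.neg hneg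
    exact ⟨L, -1, by norm_num, hlen, hL, by simpa using hsign⟩
  -- chains of both starting signs would merge into a longer one
  push Not at hpos hneg
  obtain ⟨x, hax, hx⟩ := hpos
  obtain ⟨y, hay, hy⟩ := hneg
  rcases le_total x y with hxy | hyx
  · exact ((hchain x hax).1 ⟨hx.apply_neg, y, hxy, hy⟩).elim
  · exact ((hchain y hay).2 ⟨hy.apply_neg, x, hyx, by rwa [neg_neg]⟩).elim

def trigPoly (n : ℕ) : Submodule ℝ (ℝ → ℝ) :=
  Submodule.span ℝ {g | ∃ k ≤ n, ∃ φ : ℝ, g = fun x => cos (k * x + φ)}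

theorem cos_mem_trigPoly {n k : ℕ} (hk : k ≤ n) (φ : ℝ) :
    (fun x => cos (k * x + φ)) ∈ trigPoly n :=
  Submodule.subset_span ⟨k, hk, φ, rfl⟩

theorem trigPoly_mono : Monotone trigPoly := fun _ _ h =>
  Submodule.span_mono fun _ ⟨k, hk, φ, hg⟩ => ⟨k, hk.trans h, φ, hg⟩

theorem continuous_of_mem_trigPoly {n : ℕ} {g : ℝ → ℝ} (hg : g ∈ trigPoly n) : Continuous g := by
  induction hg using Submodule.span_induction with
  | mem g hg => obtain ⟨k, -, φ, rfl⟩ := hg; fun_prop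
  | zero => exact continuous_const
  | add _ _ _ _ h₁ h₂ => exact h₁.add h₂
  | smul c _ _ h => exact h.const_smul c

theorem periodic_of_mem_trigPoly {n : ℕ} {g : ℝ → ℝ} (hg : g ∈ trigPoly n) :
    Function.Periodic g (2 * π) := by
  induction hg using Submodule.span_induction with
  | mem g hg =>
    obtain ⟨k, -, φ, rfl⟩ := hg
    intro x
    simpa only [mul_add, add_right_comm] using cos_add_nat_mul_two_pi (k * x + φ) k
  | zero => exact fun _ => rfl
  | add _ _ _ _ h₁ h₂ => exact h₁.add h₂
  | smul c _ _ h => exact h.smul c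

theorem cos_sub_mul_mem_trigPoly {n : ℕ} {h : ℝ → ℝ} (w : ℝ) (hh : h ∈ trigPoly n) :
    (fun x => cos (x - w)) * h ∈ trigPoly (n + 1) := by
  suffices trigPoly n ≤ (trigPoly (n + 1)).comap (LinearMap.mulLeft ℝ fun x => cos (x - w)) from
    this hh
  refine Submodule.span_le.2 ?_
  rintro _ ⟨k, hk, φ, rfl⟩
  simp only [SetLike.mem_coe, Submodule.mem_comap, LinearMap.mulLeft_apply]
  rcases k with _ | j
  · convert (trigPoly n.succ).smul_mem (cos φ) (cos_mem_trigPoly (Nat.le_add_left 1 n) (-w))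
      using 1
    ext x
    simp [sub_eq_add_neg, mul_comm]
  · have key : (fun x => cos (x - w)) * (fun x => cos ((j + 1 : ℕ) * x + φ)) =
        (1 / 2 : ℝ) • (fun x => cos ((j + 2 : ℕ) * x + (φ - w))) +
          (1 / 2 : ℝ) • fun x => cos (j * x + (φ + w)) := by
      ext x
      have h₁ : (j + 2 : ℕ) * x + (φ - w) = ((j + 1 : ℕ) * x + φ) + (x - w) := by push_cast; ring
      have h₂ : j * x + (φ + w) = ((j + 1 : ℕ) * x + φ) - (x - w) := by push_cast; ring
      simp only [Pi.mul_apply, Pi.add_apply, Pi.smul_apply, smul_eq_mul]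
      rw [h₁, h₂, cos_add _ (x - w), cos_sub _ (x - w)]
      ring
    rw [key]
    exact add_mem (Submodule.smul_mem _ _ (cos_mem_trigPoly (by omega) _))
      (Submodule.smul_mem _ _ (cos_mem_trigPoly (by omega) _))

theorem sin_half_mul_sin_half_mul_mem_trigPoly {n : ℕ} {h : ℝ → ℝ} (u v : ℝ)
    (hh : h ∈ trigPoly n) :
    (fun x => sin ((u - x) / 2) * sin ((v - x) / 2)) * h ∈ trigPoly (n + 1) := by
  have key : (fun x => sin ((u - x) / 2) * sin ((v - x) / 2)) * h =
      (cos ((u - v) / 2) / 2) • h + (-1 / 2 : ℝ) • ((fun x => cos (x - (u + v) / 2)) * h) := by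
    ext x
    have h₁ : (u - v) / 2 = (u - x) / 2 - (v - x) / 2 := by ring
    have h₂ : x - (u + v) / 2 = -((u - x) / 2 + (v - x) / 2) := by ring
    simp only [Pi.mul_apply, Pi.add_apply, Pi.smul_apply, smul_eq_mul]
    rw [h₁, h₂, cos_neg, cos_add, cos_sub]
    ring
  rw [key]
  exact add_mem (Submodule.smul_mem _ _ (trigPoly_mono n.le_succ hh))
    (Submodule.smul_mem _ _ (cos_sub_mul_mem_trigPoly _ hh))

theorem prod_sin_half_mem_trigPoly :
    ∀ L : List ℝ, Even L.length →
      (fun x => (L.map fun l => sin ((l - x) / 2)).prod) ∈ trigPoly (L.length / 2)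
  | [], _ => by simpa using cos_mem_trigPoly (n := 0) (k := 0) le_rfl 0
  | [_], h => by simp at h
  | u :: v :: L, h => by
    have hL : Even L.length := by simpa [Nat.even_add_one] using h
    rw [show (u :: v :: L).length / 2 = L.length / 2 + 1 by simp; omega]
    convert sin_half_mul_sin_half_mul_mem_trigPoly u v (prod_sin_half_mem_trigPoly L hL) using 1
    ext x
    simp [mul_assoc]

theorem integral_mul_eq_zero_of_mem_trigPoly {n : ℕ} {f g : ℝ → ℝ} (hf : Continuous f)
    (horth : ∀ k ≤ n, ∀ φ : ℝ, ∫ x in (0 : ℝ)..2 * π, f x * cos (k * x + φ) = 0)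
    (hg : g ∈ trigPoly n) : ∫ x in (0 : ℝ)..2 * π, f x * g x = 0 := by
  induction hg using Submodule.span_induction with
  | mem g hg =>
    obtain ⟨k, hk, φ, rfl⟩ := hg
    exact horth k hk φ
  | zero => simp
  | add g₁ g₂ hg₁ hg₂ h₁ h₂ =>
    simp only [Pi.add_apply, mul_add]
    rw [intervalIntegral.integral_add (f := fun x => f x * g₁ x) (g := fun x => f x * g₂ x)
      ((hf.mul (continuous_of_mem_trigPoly hg₁)).intervalIntegrable _ _)
      ((hf.mul (continuous_of_mem_trigPoly hg₂)).intervalIntegrable _ _), h₁, h₂, add_zero]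
  | smul c g _ h =>
    simp only [Pi.smul_apply, smul_eq_mul, mul_left_comm _ c]
    rw [intervalIntegral.integral_const_mul, h, mul_zero]

theorem integral_mul_cos_add_eq_zero {n : ℕ} {f : ℝ → ℝ} (hf : Continuous f)
    (h0 : ∫ x in (0 : ℝ)..2 * π, f x = 0)
    (hcos : ∀ k : ℕ, 1 ≤ k → k ≤ n → (∫ x in (0 : ℝ)..2 * π, f x * cos (k * x)) = 0)
    (hsin : ∀ k : ℕ, 1 ≤ k → k ≤ n → (∫ x in (0 : ℝ)..2 * π, f x * sin (k * x)) = 0)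
    (k : ℕ) (hk : k ≤ n) (φ : ℝ) : ∫ x in (0 : ℝ)..2 * π, f x * cos (k * x + φ) = 0 := by
  have hc : ∫ x in (0 : ℝ)..2 * π, f x * cos (k * x) = 0 := by
    rcases k.eq_zero_or_pos with rfl | hk₀
    · simpa using h0
    · exact hcos k hk₀ hk
  have hs : ∫ x in (0 : ℝ)..2 * π, f x * sin (k * x) = 0 := by
    rcases k.eq_zero_or_pos with rfl | hk₀
    · simp
    · exact hsin k hk₀ hk
  have hexp : ∀ x, f x * cos (k * x + φ) =
      cos φ * (f x * cos (k * x)) - sin φ * (f x * sin (k * x)) := fun x => by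
    rw [cos_add]; ring
  simp only [hexp]
  rw [intervalIntegral.integral_sub, intervalIntegral.integral_const_mul,
    intervalIntegral.integral_const_mul, hc, hs, mul_zero, mul_zero, sub_zero]
  all_goals exact Continuous.intervalIntegrable (by fun_prop) _ _

theorem sin_half_div_nonneg {t : ℝ} (ht : |t| ≤ 2 * π) : 0 ≤ sin (t / 2) / t := by
  obtain ⟨ht₁, ht₂⟩ := abs_le.1 ht
  rcases le_total 0 t with h | h
  · exact div_nonneg (sin_nonneg_of_nonneg_of_le_pi (by linarith) (by linarith)) h
  · exact div_nonneg_of_nonpos (sin_nonpos_of_nonpos_of_neg_pi_le (by linarith) (by linarith)) h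

theorem prod_sin_half_eq (L : List ℝ) (x : ℝ) :
    (L.map fun l => sin ((l - x) / 2)).prod =
      (L.map fun l => sin ((l - x) / 2) / (l - x)).prod * (L.map (· - x)).prod := by
  rw [← List.prod_map_mul]
  congr 1
  refine List.map_congr_left fun l _ => ?_
  rcases eq_or_ne l x with rfl | h
  · simp
  · exact (div_mul_cancel₀ _ (sub_ne_zero.2 h)).symm

theorem nonneg_mul_prod_sin_half {a c x : ℝ} {L : List ℝ} (hL : ∀ l ∈ L, l ∈ Icc a (a + 2 * π))
    (hx : x ∈ Icc a (a + 2 * π)) (h : 0 ≤ c * (L.map (· - x)).prod) :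
    0 ≤ c * (L.map fun l => sin ((l - x) / 2)).prod := by
  have hC : 0 ≤ (L.map fun l => sin ((l - x) / 2) / (l - x)).prod :=
    List.prod_nonneg fun _ hC => by
      obtain ⟨l, hl, rfl⟩ := List.mem_map.1 hC
      exact sin_half_div_nonneg (abs_le.2 ⟨by linarith [(hL l hl).1, hx.2],
        by linarith [(hL l hl).2, hx.1]⟩)
  rw [prod_sin_half_eq]
  linarith [mul_nonneg hC h]

theorem exists_mem_Ioo_ne_zero_notMem {f : ℝ → ℝ} {c : ℝ} (hf : Continuous f)
    (hper : Function.Periodic f c) (hc : 0 < c) (hne : ∃ x, f x ≠ 0) (a : ℝ) (s : Finset ℝ) :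
    ∃ x ∈ Ioo a (a + c), f x ≠ 0 ∧ x ∉ s := by
  have hV : (Ioo a (a + c) ∩ {x | f x ≠ 0}).Nonempty := by
    by_contra! hV
    obtain ⟨x₀, hx₀⟩ := hne
    obtain ⟨y, hy, hxy⟩ := hper.exists_mem_Ico hc x₀ a
    have hzero : Icc a (a + c) ⊆ {x | f x = 0} := by
      rw [← closure_Ioo (by linarith : a ≠ a + c)]
      refine closure_minimal (fun x hx => ?_) (isClosed_eq hf continuous_const)
      by_contra hfx
      exact hV.subset ⟨hx, hfx⟩
    exact hx₀ (hxy.trans (hzero (Ico_subset_Icc_self hy)))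
  obtain ⟨y, hy⟩ := hV
  have hopen : IsOpen (Ioo a (a + c) ∩ {x | f x ≠ 0}) :=
    isOpen_Ioo.inter (isOpen_ne_fun hf continuous_const)
  obtain ⟨x, hx, hxs⟩ := (infinite_of_mem_nhds y (hopen.mem_nhds hy)).exists_notMem_finset s
  exact ⟨x, hx.1, hx.2, hxs⟩

theorem exists_mul_prod_neg_of_orthogonal {n : ℕ} {f : ℝ → ℝ} (hf : Continuous f)
    (hper : Function.Periodic f (2 * π)) (hne : ∃ x, f x ≠ 0)
    (horth : ∀ g ∈ trigPoly n, ∫ x in (0 : ℝ)..2 * π, f x * g x = 0) {a ε : ℝ} (hε : ε ≠ 0)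
    {L : List ℝ} (hev : Even L.length) (hlen : L.length ≤ 2 * n)
    (hL : ∀ l ∈ L, l ∈ Icc a (a + 2 * π)) :
    ∃ x ∈ Icc a (a + 2 * π), ε * f x * (L.map (· - x)).prod < 0 := by
  by_contra! hsign
  set g := fun x => (L.map fun l => sin ((l - x) / 2)).prod
  have hg : g ∈ trigPoly n := trigPoly_mono (by omega) (prod_sin_half_mem_trigPoly L hev)
  have hnonneg : ∀ x ∈ Icc a (a + 2 * π), 0 ≤ ε * (f x * g x) := fun x hx => by
    simpa only [mul_assoc] using nonneg_mul_prod_sin_half hL hx (hsign x hx)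
  have hzero : ∫ x in a..a + 2 * π, ε * (f x * g x) = 0 := by
    have hshift := (hper.mul (periodic_of_mem_trigPoly hg)).intervalIntegral_add_eq a 0
    simp only [Pi.mul_apply, zero_add] at hshift
    rw [intervalIntegral.integral_const_mul, hshift, horth g hg, mul_zero]
  obtain ⟨x, hx, hfx, hxL⟩ :=
    exists_mem_Ioo_ne_zero_notMem hf hper two_pi_pos hne a L.toFinset
  have hgx : g x ≠ 0 := by
    refine List.prod_ne_zero fun h0 => ?_
    obtain ⟨l, hl, hsin⟩ := List.mem_map.1 h0
    have hlx := (sin_eq_zero_iff_of_lt_of_lt (by linarith [hx.2, (hL l hl).1])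
      (by linarith [hx.1, (hL l hl).2])).1 hsin
    exact hxL (List.mem_toFinset.2 (by rwa [show x = l by linarith]))
  have hpos : 0 < ∫ x in a..a + 2 * π, ε * (f x * g x) := intervalIntegral.integral_pos
    (by linarith [pi_pos])
    (continuous_const.mul (hf.mul (continuous_of_mem_trigPoly hg))).continuousOn
    (fun x hx => hnonneg x (Ioc_subset_Icc_self hx))
    ⟨x, Ioo_subset_Icc_self hx, lt_of_le_of_ne (hnonneg x (Ioo_subset_Icc_self hx))
      (mul_ne_zero hε (mul_ne_zero hfx hgx)).symm⟩
  exact hpos.ne' hzero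

theorem exists_signChain_of_orthogonal {n : ℕ} {f : ℝ → ℝ} (hf : Continuous f)
    (hper : Function.Periodic f (2 * π)) (hne : ∃ x, f x ≠ 0)
    (horth : ∀ g ∈ trigPoly n, ∫ x in (0 : ℝ)..2 * π, f x * g x = 0) (a : ℝ) :
    ∃ x, a ≤ x ∧ (SignChain (a + 2 * π) f (2 * n + 1) x ∨
      SignChain (a + 2 * π) (-f) (2 * n + 1) x) := by
  by_contra! h
  obtain ⟨L, ε, hε, hlen, hL, hsign⟩ :=
    exists_nonneg_const_mul_prod_of_not_signChain (2 * n) hf.continuousOn h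
  rcases L.length.even_or_odd with heven | hodd
  · obtain ⟨x, hx, hneg⟩ := exists_mul_prod_neg_of_orthogonal hf hper hne horth hε heven hlen hL
    exact (hsign x hx).not_gt hneg
  -- pad with the right endpoint, where the extra factor `a + 2π - x` is nonnegative
  obtain ⟨x, hx, hneg⟩ := exists_mul_prod_neg_of_orthogonal hf hper hne horth hε
    (L := (a + 2 * π) :: L) (by simpa [Nat.even_add_one] using hodd)
    (by obtain ⟨k, hk⟩ := hodd; simp only [List.length_cons]; omega)
    (by
      simp only [List.mem_cons, forall_eq_or_imp]
      exact ⟨⟨by linarith [pi_pos], le_rfl⟩, hL⟩)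
  rw [List.map_cons, List.prod_cons] at hneg
  linarith [mul_nonneg (sub_nonneg.2 hx.2) (hsign x hx)]

end Hurwitz

theorem hurwitz_sign_changes_general
    (n : ℕ) (f : ℝ → ℝ) (hf : Continuous f)
    (hper : Function.Periodic f (2 * Real.pi))
    (hne : ∃ x, f x ≠ 0)
    (h0 : ∫ x in (0:ℝ)..(2 * Real.pi), f x = 0)
    (hcos : ∀ k : ℕ, 1 ≤ k → k ≤ n →
      (∫ x in (0:ℝ)..(2 * Real.pi), f x * Real.cos (k * x)) = 0)
    (hsin : ∀ k : ℕ, 1 ≤ k → k ≤ n →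
      (∫ x in (0:ℝ)..(2 * Real.pi), f x * Real.sin (k * x)) = 0) :
    ∀ c ℓ : ℝ, 2 * Real.pi < ℓ →
      ∃ x : Fin (2 * n + 2) → ℝ, StrictMono x ∧ (∀ i, x i ∈ Set.Ioo c (c + ℓ)) ∧
        ∀ i : Fin (2 * n + 1), f (x i.castSucc) * f (x i.succ) < 0 := by
  intro c ℓ hℓ
  have horth : ∀ g ∈ Hurwitz.trigPoly n, ∫ x in (0 : ℝ)..2 * π, f x * g x = 0 := fun g hg =>
    Hurwitz.integral_mul_eq_zero_of_mem_trigPoly hf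
      (Hurwitz.integral_mul_cos_add_eq_zero hf h0 hcos hsin) hg
  set a := c + (ℓ - 2 * π) / 2
  have hsub : Icc a (a + 2 * π) ⊆ Ioo c (c + ℓ) :=
    Icc_subset_Ioo (by simp only [a]; linarith) (by simp only [a]; linarith)
  obtain ⟨x₀, hax₀, hchain | hchain⟩ := Hurwitz.exists_signChain_of_orthogonal hf hper hne horth a
  · obtain ⟨x, -, hmono, hmem, hsign⟩ := hchain.exists_strictMono hax₀
    exact ⟨x, hmono, fun i => hsub (hmem i), hsign⟩
  · obtain ⟨x, -, hmono, hmem, hsign⟩ := hchain.exists_strictMono hax₀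
    exact ⟨x, hmono, fun i => hsub (hmem i), fun i => by simpa using hsign i⟩

/-- Hurwitz's theorem: if the first `n` harmonics (the `2n+1` first Fourier
coefficients) of a continuous `2π`-periodic function `f`, not identically zero,
vanish, then on every interval of length greater than `2π` the function `f`
changes sign at least `2n+1` times. -/
theorem hurwitz_sign_changes
    (n : ℕ) (hn : 1 ≤ n) (f : ℝ → ℝ) (hf : Continuous f)
    (hper : Function.Periodic f (2 * Real.pi))
    (hne : ∃ x, f x ≠ 0)
    (h0 : ∫ x in (0:ℝ)..(2 * Real.pi), f x = 0)
    (hcos : ∀ k : ℕ, 1 ≤ k → k ≤ n →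
      (∫ x in (0:ℝ)..(2 * Real.pi), f x * Real.cos (k * x)) = 0)
    (hsin : ∀ k : ℕ, 1 ≤ k → k ≤ n →
      (∫ x in (0:ℝ)..(2 * Real.pi), f x * Real.sin (k * x)) = 0) :
    ∀ c ℓ : ℝ, 2 * Real.pi < ℓ →
      ∃ x : Fin (2 * n + 2) → ℝ, StrictMono x ∧ (∀ i, x i ∈ Set.Ioo c (c + ℓ)) ∧
        ∀ i : Fin (2 * n + 1), f (x i.castSucc) * f (x i.succ) < 0 :=
  hurwitz_sign_changes_general n f hf hper hne h0 hcos hsin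
end

section
/- Let f₁, …, f_n be a Chebyshev system of order n on a compact interval [a,b], let ρ : [a,b] → ℝ be continuous with ρ ≥ 0, and let f : [a,b] → ℝ be continuous with f·ρ not identically zero. If ∫_a^b f(x)·f_j(x)·ρ(x) dx = 0 for every j = 1, …, n, then f changes sign at least n times in [a,b]. -/
/-!
Suppose `f` had fewer than `n` sign changes. A longest alternating chain `x₀ < ⋯ < x_k`
(`k < n`) of `f` yields `k` points `T` such that `f(z) · (-1) ^ #{t ∈ T | t < z}` has constant
sign on `[a, b]`: between consecutive chain points take the last point where `f` still has the
sign of the left one; a violation of the pattern anywhere would lengthen the chain.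

A Chebyshev system has a nonzero combination `g` with the same sign pattern. If `#T = n - 1`,
take `g(z) = ±det (F j (x i))` with `x` the increasing enumeration of `T ∪ {z}`, the sign being
`(-1) ^ #{t ∈ T | t < z}`: the determinant has constant sign on increasing tuples, which form a
connected set on which it never vanishes. For smaller `T` one adds nodes accumulating at `b` and
passes to a limit of normalized coefficient vectors.

Then `f g ρ` has constant sign and integral `0` by orthogonality, so it vanishes almost
everywhere; as `g` has only finitely many zeros, `f ρ` vanishes identically, a contradiction.
-/

open Set Filter Topology MeasureTheory
open scoped Finset

theorem Finset.exists_orderEmbOfFin_insert {α : Type*} [LinearOrder α] {P : Finset α} {z : α}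
    {m : ℕ} (hP : #P = m) (h : #(insert z P) = m + 1) :
    ∃ p : Fin (m + 1), (insert z P).orderEmbOfFin h p = z ∧
      (insert z P).orderEmbOfFin h ∘ p.succAbove = P.orderEmbOfFin hP ∧
      (p : ℕ) = #{y ∈ P | y < z} := by
  set x := (insert z P).orderEmbOfFin h
  obtain ⟨p, hp⟩ : z ∈ Set.range x := by
    rw [Finset.range_orderEmbOfFin]; exact Finset.mem_insert_self z P
  refine ⟨p, hp, Finset.orderEmbOfFin_unique hP (fun i => ?_) (x.strictMono.comp
    (Fin.strictMono_succAbove p)), ?_⟩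
  · have hmem : x (p.succAbove i) ∈ insert z P := Finset.orderEmbOfFin_mem _ h _
    have hne : x (p.succAbove i) ≠ z := hp ▸ x.injective.ne (Fin.succAbove_ne p i)
    exact (Finset.mem_insert.1 hmem).resolve_left hne
  · have hfilter : {y ∈ P | y < z} = {y ∈ insert z P | y < z} := by
      rw [Finset.filter_insert, if_neg (lt_irrefl z)]
    rw [hfilter, ← Finset.image_orderEmbOfFin_univ (insert z P) h, Finset.filter_image,
      Finset.card_image_of_injective _ x.injective, ← Fin.card_Iio p]
    congr 1
    ext i
    rw [Finset.mem_filter, Finset.mem_Iio, ← x.lt_iff_lt, hp]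
    exact (and_iff_right (Finset.mem_univ i)).symm

theorem List.exists_length_maximal {α : Type*} {p : List α → Prop} {N : ℕ}
    (hN : ∀ l, p l → l.length ≤ N) {l₀ : List α} (h₀ : p l₀) :
    ∃ l, p l ∧ l₀.length ≤ l.length ∧ ∀ l', p l' → l'.length ≤ l.length := by
  classical
  let P k := ∃ l, p l ∧ l.length = k
  obtain ⟨l, hl, hlen⟩ := Nat.findGreatest_spec (P := P) (hN l₀ h₀) ⟨l₀, h₀, rfl⟩
  refine ⟨l, hl, hlen ▸ Nat.le_findGreatest (hN l₀ h₀) ⟨l₀, h₀, rfl⟩, fun l' hl' => ?_⟩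
  exact hlen ▸ Nat.le_findGreatest (P := P) (hN l' hl') ⟨l', hl', rfl⟩

theorem convex_setOf_strictMono {n : ℕ} : Convex ℝ {x : Fin n → ℝ | StrictMono x} := by
  refine convex_iff_forall_pos.2 fun x hx y hy μ ν hμ hν _ i j hij => ?_
  simp only [Pi.add_apply, Pi.smul_apply, smul_eq_mul]
  exact add_lt_add (mul_lt_mul_of_pos_left (hx hij) hμ) (mul_lt_mul_of_pos_left (hy hij) hν)

noncomputable def alternatingSign (T : Finset ℝ) (z : ℝ) : ℝ :=
  (-1) ^ #{t ∈ T | t < z}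

section AlternatingSign

variable {T U : Finset ℝ} {t z : ℝ}

theorem alternatingSign_mul_self : alternatingSign T z * alternatingSign T z = 1 := by
  rw [alternatingSign, ← pow_add, ← two_mul, pow_mul]; norm_num

theorem alternatingSign_of_forall_le (h : ∀ t ∈ T, z ≤ t) : alternatingSign T z = 1 := by
  rw [alternatingSign, Finset.filter_false_of_mem fun t ht => not_lt.2 (h t ht)]; simp

theorem alternatingSign_union_of_forall_le (h : ∀ u ∈ U, z ≤ u) :
    alternatingSign (T ∪ U) z = alternatingSign T z := by
  rw [alternatingSign, alternatingSign, Finset.filter_union,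
    Finset.filter_false_of_mem fun u hu => not_lt.2 (h u hu), Finset.union_empty]

theorem alternatingSign_insert_of_lt (ht : t ∉ T) (htz : t < z) :
    alternatingSign (insert t T) z = -alternatingSign T z := by
  rw [alternatingSign, alternatingSign, Finset.filter_insert, if_pos htz,
    Finset.card_insert_of_notMem fun h => ht (Finset.mem_filter.1 h).1, pow_succ, mul_neg_one]

end AlternatingSign

def IsChebyshevSystemOn {n : ℕ} (F : Fin n → ℝ → ℝ) (s : Set ℝ) : Prop :=
  ∀ c : Fin n → ℝ, c ≠ 0 → {x ∈ s | ∑ j, c j * F j x = 0}.encard ≤ (n - 1 : ℕ)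

theorem sum_smul_mul {n : ℕ} (F : Fin n → ℝ → ℝ) (r : ℝ) (c : Fin n → ℝ) (z : ℝ) :
    ∑ j, (r • c) j * F j z = r * ∑ j, c j * F j z := by
  simp [Finset.mul_sum, mul_assoc]

section Collocation

variable {n m : ℕ} {s : Set ℝ}

def collocationMatrix (F : Fin n → ℝ → ℝ) (x : Fin n → ℝ) : Matrix (Fin n) (Fin n) ℝ :=
  Matrix.of fun i j => F j (x i)

theorem IsChebyshevSystemOn.det_collocationMatrix_ne_zero {F : Fin n → ℝ → ℝ}
    (hF : IsChebyshevSystemOn F s) {x : Fin n → ℝ} (hx : Function.Injective x)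
    (hxs : ∀ i, x i ∈ s) : (collocationMatrix F x).det ≠ 0 := by
  intro h
  obtain ⟨c, hc, hMc⟩ := Matrix.exists_mulVec_eq_zero_iff.2 h
  have hzeros : range x ⊆ {y ∈ s | ∑ j, c j * F j y = 0} := by
    rintro _ ⟨i, rfl⟩
    refine ⟨hxs i, ?_⟩
    simpa [collocationMatrix, Matrix.mulVec, dotProduct, mul_comm] using congrFun hMc i
  have hn : n ≠ 0 := by rintro rfl; exact hc (Subsingleton.elim _ _)
  have := (hx.encard_range.trans (encard_mono hzeros)).trans (hF c hc)
  simp only [ENat.card_eq_coe_fintype_card, Fintype.card_fin, Nat.cast_le] at this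
  omega

theorem IsChebyshevSystemOn.det_collocationMatrix_mul_pos {F : Fin n → ℝ → ℝ}
    (hF : IsChebyshevSystemOn F s) (hs : Convex ℝ s) (hFc : ∀ j, ContinuousOn (F j) s)
    {x y : Fin n → ℝ} (hx : StrictMono x) (hxs : ∀ i, x i ∈ s) (hy : StrictMono y)
    (hys : ∀ i, y i ∈ s) :
    0 < (collocationMatrix F x).det * (collocationMatrix F y).det := by
  set S := {x : Fin n → ℝ | StrictMono x} ∩ univ.pi fun _ => s
  have hS : IsPreconnected S :=
    (convex_setOf_strictMono.inter (convex_pi fun _ _ => hs)).isPreconnected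
  have hD : ContinuousOn (fun x => (collocationMatrix F x).det) S :=
    continuous_id.matrix_det.comp_continuousOn <| continuousOn_pi.2 fun i =>
      continuousOn_pi.2 fun j => (hFc j).comp (continuous_apply i).continuousOn
        fun x hx => hx.2 i (mem_univ i)
  have hD0 : ∀ x ∈ S, (collocationMatrix F x).det ≠ 0 := fun x hx =>
    hF.det_collocationMatrix_ne_zero hx.1.injective fun i => hx.2 i (mem_univ i)
  have hxS : x ∈ S := ⟨hx, fun i _ => hxs i⟩
  have hyS : y ∈ S := ⟨hy, fun i _ => hys i⟩
  by_contra hneg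
  rcases mul_nonpos_iff.1 (not_lt.1 hneg) with ⟨h1, h2⟩ | ⟨h1, h2⟩
  · obtain ⟨z, hz, hz0⟩ := hS.intermediate_value hyS hxS hD ⟨h2, h1⟩
    exact hD0 z hz hz0
  · obtain ⟨z, hz, hz0⟩ := hS.intermediate_value hxS hyS hD ⟨h1, h2⟩
    exact hD0 z hz hz0

/-- `∑ j, cofactors F t j * F j z` is the determinant of `collocationMatrix F (Fin.cons z t)`,
expanded along its first row. -/
def cofactors (F : Fin (m + 1) → ℝ → ℝ) (t : Fin m → ℝ) (j : Fin (m + 1)) : ℝ :=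
  (-1) ^ (j : ℕ) * (collocationMatrix (F ∘ j.succAbove) t).det

theorem det_collocationMatrix_eq_cofactors (F : Fin (m + 1) → ℝ → ℝ) {x : Fin (m + 1) → ℝ}
    {t : Fin m → ℝ} (p : Fin (m + 1)) (hxt : x ∘ p.succAbove = t) :
    (collocationMatrix F x).det = (-1) ^ (p : ℕ) * ∑ j, cofactors F t j * F j (x p) := by
  subst hxt
  rw [Matrix.det_succ_row _ p, Finset.mul_sum]
  refine Finset.sum_congr rfl fun j _ => ?_
  simp only [cofactors, collocationMatrix, pow_add, Matrix.of_apply]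
  rw [show (Matrix.of fun i j => F j (x i)).submatrix p.succAbove j.succAbove =
    Matrix.of fun i k => (F ∘ j.succAbove) k ((x ∘ p.succAbove) i) from rfl]
  ring

end Collocation

theorem sum_cofactors_mul_eq_zero {m : ℕ} (F : Fin (m + 1) → ℝ → ℝ) (t : Fin m → ℝ) (i : Fin m) :
    ∑ j, cofactors F t j * F j (t i) = 0 := by
  have hrows : collocationMatrix F (Fin.cons (t i) t) 0 =
      collocationMatrix F (Fin.cons (t i) t) i.succ := by
    ext j; simp [collocationMatrix]
  have := det_collocationMatrix_eq_cofactors F (x := Fin.cons (t i) t) (t := t) 0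
    (funext fun k => by simp)
  rw [Matrix.det_zero_of_row_eq (Fin.succ_ne_zero i).symm hrows] at this
  simpa using this.symm

theorem det_collocationMatrix_orderEmbOfFin_insert {m : ℕ} (F : Fin (m + 1) → ℝ → ℝ)
    {P : Finset ℝ} {z : ℝ} (hP : #P = m) (h : #(insert z P) = m + 1) :
    (collocationMatrix F ((insert z P).orderEmbOfFin h)).det =
      alternatingSign P z * ∑ j, cofactors F (P.orderEmbOfFin hP) j * F j z := by
  obtain ⟨p, hpz, hpt, hpcount⟩ := Finset.exists_orderEmbOfFin_insert hP h
  rw [det_collocationMatrix_eq_cofactors F p hpt, hpz, alternatingSign, hpcount]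

theorem IsChebyshevSystemOn.exists_alternatingSign_mul_nonneg_of_card_eq {m : ℕ} {s : Set ℝ}
    {F : Fin (m + 1) → ℝ → ℝ} (hF : IsChebyshevSystemOn F s) (hs : Convex ℝ s)
    (hsi : s.Infinite) (hFc : ∀ j, ContinuousOn (F j) s) {P : Finset ℝ} (hPs : ↑P ⊆ s)
    (hP : #P = m) :
    ∃ c : Fin (m + 1) → ℝ, c ≠ 0 ∧ (∀ p ∈ P, ∑ j, c j * F j p = 0) ∧
      ∀ z ∈ s, 0 ≤ alternatingSign P z * ∑ j, c j * F j z := by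
  set t := P.orderEmbOfFin hP
  set g : ℝ → ℝ := fun z => ∑ j, cofactors F t j * F j z
  have hvanish : ∀ p ∈ P, g p = 0 := fun p hp => by
    obtain ⟨i, rfl⟩ : p ∈ range t := by rw [Finset.range_orderEmbOfFin]; exact hp
    exact sum_cofactors_mul_eq_zero F t i
  have hcard : ∀ z ∉ P, #(insert z P) = m + 1 := fun z hz => by
    rw [Finset.card_insert_of_notMem hz, hP]
  have hmem : ∀ z ∈ s, ∀ (hz : z ∉ P) i, (insert z P).orderEmbOfFin (hcard z hz) i ∈ s :=
    fun z hz hzP i => Finset.coe_insert z P ▸ insert_subset hz hPs <|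
      Finset.orderEmbOfFin_mem _ (hcard z hzP) i
  obtain ⟨z₀, hz₀s, hz₀P⟩ := (hsi.sdiff P.finite_toSet).nonempty
  set x₀ := (insert z₀ P).orderEmbOfFin (hcard z₀ hz₀P)
  set δ := (collocationMatrix F x₀).det
  have hδ : δ = alternatingSign P z₀ * g z₀ := det_collocationMatrix_orderEmbOfFin_insert F hP _
  have hδ0 : δ ≠ 0 := hF.det_collocationMatrix_ne_zero x₀.injective (hmem z₀ hz₀s hz₀P)
  refine ⟨δ • cofactors F t, fun h0 => ?_, fun p hp => ?_, fun z hz => ?_⟩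
  · have := congrArg (fun c => ∑ j, c j * F j z₀) h0
    simp only [sum_smul_mul, Pi.zero_apply, zero_mul, Finset.sum_const_zero] at this
    exact mul_ne_zero hδ0 (right_ne_zero_of_mul (hδ ▸ hδ0)) this
  · rw [sum_smul_mul]; exact mul_eq_zero_of_right _ (hvanish p hp)
  · show 0 ≤ alternatingSign P z * ∑ j, (δ • cofactors F t) j * F j z
    rw [sum_smul_mul]
    by_cases hzP : z ∈ P
    · simp [g, hvanish z hzP]
    have hpos : 0 < δ * (alternatingSign P z * g z) := by
      have := hF.det_collocationMatrix_mul_pos hs hFc x₀.strictMono (hmem z₀ hz₀s hz₀P)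
        ((insert z P).orderEmbOfFin (hcard z hzP)).strictMono (hmem z hz hzP)
      rwa [det_collocationMatrix_orderEmbOfFin_insert F hP (z := z)] at this
    linarith [show alternatingSign P z * (δ * g z) = δ * (alternatingSign P z * g z) by ring]

theorem IsChebyshevSystemOn.exists_unit_alternatingSign_mul_nonneg_of_lt {m r : ℕ} {a b h : ℝ}
    {F : Fin (m + 1) → ℝ → ℝ} (hF : IsChebyshevSystemOn F (Icc a b))
    (hFc : ∀ j, ContinuousOn (F j) (Icc a b)) (hh : 0 < h) (ha : a < b - r * h)
    {T : Finset ℝ} (hT : ↑T ⊆ Ico a (b - r * h)) (hTr : #T + r = m) :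
    ∃ c : Fin (m + 1) → ℝ, ‖c‖ = 1 ∧ ∀ z ∈ Icc a b, z < b - r * h ∨ z = b →
      0 ≤ alternatingSign T z * ∑ j, c j * F j z := by
  set N := (Finset.range r).image fun i : ℕ => b - i * h
  have hN : ∀ u ∈ N, b - r * h < u ∧ u ≤ b := by
    intro u hu
    obtain ⟨i, hi, rfl⟩ := Finset.mem_image.1 hu
    have hi' : (i : ℝ) < r := by exact_mod_cast Finset.mem_range.1 hi
    constructor <;> nlinarith [(i.cast_nonneg : (0 : ℝ) ≤ i)]
  have hdisj : Disjoint T N := Finset.disjoint_left.2 fun t ht htN => by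
    linarith [(hT ht).2, (hN t htN).1]
  have hcard : #(T ∪ N) = m := by
    rw [Finset.card_union_of_disjoint hdisj, Finset.card_image_of_injective _ fun i j hij => by
      simpa [hh.ne'] using hij, Finset.card_range, hTr]
  have hsub : ↑(T ∪ N) ⊆ Icc a b := by
    intro u hu
    rcases Finset.mem_union.1 hu with hu | hu
    · exact ⟨(hT hu).1, by linarith [(hT hu).2, mul_nonneg r.cast_nonneg hh.le]⟩
    · exact ⟨by linarith [(hN u hu).1], (hN u hu).2⟩
  obtain ⟨c, hc0, hcP, hcsign⟩ := hF.exists_alternatingSign_mul_nonneg_of_card_eq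
    (convex_Icc a b) (Icc_infinite (ha.trans_le (by nlinarith [r.cast_nonneg (α := ℝ)]))) hFc
    hsub hcard
  refine ⟨(‖c‖⁻¹ : ℝ) • c, norm_smul_inv_norm hc0, fun z hz hzb => ?_⟩
  rw [sum_smul_mul, mul_left_comm]
  refine mul_nonneg (by positivity) ?_
  rcases hzb with hzb | rfl
  · rw [← alternatingSign_union_of_forall_le fun u hu => by linarith [(hN u hu).1]]
    exact hcsign z hz
  · rcases r.eq_zero_or_pos with rfl | hr0
    · simpa [N] using hcsign z hz
    · rw [hcP z (Finset.mem_union_right _ (Finset.mem_image.2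
        ⟨0, Finset.mem_range.2 hr0, by simp⟩)), mul_zero]

theorem IsChebyshevSystemOn.exists_alternatingSign_mul_nonneg {m : ℕ} {a b : ℝ}
    {F : Fin (m + 1) → ℝ → ℝ} (hF : IsChebyshevSystemOn F (Icc a b))
    (hFc : ∀ j, ContinuousOn (F j) (Icc a b)) (hab : a < b) {T : Finset ℝ}
    (hT : ↑T ⊆ Ico a b) (hTm : #T ≤ m) :
    ∃ c : Fin (m + 1) → ℝ, c ≠ 0 ∧ ∀ z ∈ Icc a b, 0 ≤ alternatingSign T z * ∑ j, c j * F j z := by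
  obtain ⟨r, hr⟩ : ∃ r, #T + r = m := ⟨m - #T, by omega⟩
  obtain ⟨β, haβ, hβb, hTβ⟩ : ∃ β, a ≤ β ∧ β < b ∧ ∀ t ∈ T, t ≤ β := by
    refine ⟨(insert a T).max' (Finset.insert_nonempty a T),
      (insert a T).le_max' a (Finset.mem_insert_self a T), ?_,
      fun t ht => (insert a T).le_max' t (Finset.mem_insert_of_mem ht)⟩
    rcases Finset.mem_insert.1 ((insert a T).max'_mem (Finset.insert_nonempty a T)) with h | h
    · rw [h]; exact hab
    · exact (hT h).2
  set h : ℕ → ℝ := fun k => (b - β) / (r + k + 1)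
  have hh : ∀ k, 0 < h k ∧ β < b - r * h k := fun k => by
    refine ⟨by positivity, ?_⟩
    rw [← mul_div_assoc, lt_sub_iff_add_lt, ← lt_sub_iff_add_lt', div_lt_iff₀ (by positivity)]
    nlinarith [sub_pos.2 hβb, (k.cast_nonneg : (0 : ℝ) ≤ k)]
  have hhlim : Tendsto (fun k => b - r * h k) atTop (𝓝 b) := by
    simpa using tendsto_const_nhds.sub <| (tendsto_const_nhds.div_atTop <|
      tendsto_atTop_add_const_right _ _ <| tendsto_atTop_add_const_left _ _
        tendsto_natCast_atTop_atTop).const_mul (r : ℝ)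
  choose c hc1 hcsign using fun k => hF.exists_unit_alternatingSign_mul_nonneg_of_lt hFc
    (hh k).1 (haβ.trans_lt (hh k).2) (fun t ht => ⟨(hT ht).1, (hTβ t ht).trans_lt (hh k).2⟩) hr
  obtain ⟨c₀, hc₀, φ, hφ, hlim⟩ := (isCompact_sphere (0 : Fin (m + 1) → ℝ) 1).tendsto_subseq
    fun k => mem_sphere_zero_iff_norm.2 (hc1 k)
  refine ⟨c₀, ne_zero_of_mem_unit_sphere ⟨c₀, hc₀⟩, fun z hz => ?_⟩
  have hev : ∀ᶠ k in atTop, z < b - r * h (φ k) ∨ z = b := by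
    rcases hz.2.lt_or_eq with hzb | hzb
    · exact (hφ.tendsto_atTop.eventually (hhlim.eventually_const_lt hzb)).mono fun _ => Or.inl
    · exact .of_forall fun _ => Or.inr hzb
  have hconv : Tendsto (fun k => ∑ j, c (φ k) j * F j z) atTop (𝓝 (∑ j, c₀ j * F j z)) :=
    tendsto_finsetSum _ fun j _ => ((continuous_apply j).tendsto c₀ |>.comp hlim).mul_const _
  exact ge_of_tendsto (hconv.const_mul _) (hev.mono fun k hk => hcsign (φ k) z hz hk)

section SignChain

variable {f : ℝ → ℝ} {s : Set ℝ}

def IsSignChange (f : ℝ → ℝ) (x y : ℝ) : Prop :=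
  x < y ∧ f x * f y < 0

def IsSignChainIn (f : ℝ → ℝ) (s : Set ℝ) (l : List ℝ) : Prop :=
  (∀ x ∈ l, x ∈ s) ∧ l.IsChain (IsSignChange f)

theorem IsSignChainIn.exists_strictMono {l : List ℝ} (hl : IsSignChainIn f s l) {n : ℕ}
    (hn : n + 1 ≤ l.length) :
    ∃ x : Fin (n + 1) → ℝ, StrictMono x ∧ (∀ i, x i ∈ s) ∧
      ∀ i : Fin n, f (x i.castSucc) * f (x i.succ) < 0 :=
  ⟨fun i => l[(i : ℕ)], Fin.strictMono_iff_lt_succ.2 fun i => (hl.2.getElem i (by omega)).1,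
    fun i => hl.1 _ (List.getElem_mem _), fun i => (hl.2.getElem i (by omega)).2⟩

theorem exists_isSignChainIn_maximal {N : ℕ}
    (hN : ∀ l, IsSignChainIn f s l → l.length ≤ N) {x₁ : ℝ} (hx₁ : x₁ ∈ s) (hfx₁ : f x₁ ≠ 0) :
    ∃ x₀ l, IsSignChainIn f s (x₀ :: l) ∧ f x₀ ≠ 0 ∧
      ∀ l', IsSignChainIn f s l' → l'.length ≤ l.length + 1 := by
  have h₁ : IsSignChainIn f s [x₁] := ⟨by simpa using hx₁, .singleton _⟩
  obtain ⟨_ | ⟨x₀, _ | ⟨y, l⟩⟩, hl, hlen, hmax⟩ := List.exists_length_maximal hN h₁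
  · simp at hlen
  · exact ⟨x₁, [], h₁, hfx₁, hmax⟩
  · exact ⟨x₀, y :: l, hl, left_ne_zero_of_mul (List.isChain_cons_cons.1 hl.2).1.2.ne, hmax⟩

theorem exists_last_point_of_sign (hs : s.OrdConnected) (hf : ContinuousOn f s) {x y : ℝ}
    (hx : x ∈ s) (hy : y ∈ s) (hxy : IsSignChange f x y) :
    ∃ t ∈ Ico x y, (∀ w ∈ Ioc t y, f x * f w ≤ 0) ∧
      ∀ z ∈ Icc x t, f x * f z < 0 → ∃ w ∈ Ioo z y, 0 < f x * f w := by
  set S := {w ∈ Icc x y | 0 < f x * f w}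
  have hxS : x ∈ S := ⟨left_mem_Icc.2 hxy.1.le, mul_self_pos.2 (left_ne_zero_of_mul hxy.2.ne)⟩
  have hSb : BddAbove S := ⟨y, fun w hw => hw.1.2⟩
  have hclosed : IsClosed (Icc x y ∩ (fun w => f x * f w) ⁻¹' Ici 0) :=
    (continuousOn_const.mul (hf.mono (hs.out hx hy))).preimage_isClosed_of_isClosed
      isClosed_Icc isClosed_Ici
  have ht : sSup S ∈ Icc x y ∩ (fun w => f x * f w) ⁻¹' Ici 0 :=
    hclosed.closure_subset_iff.2 (fun w hw => ⟨hw.1, hw.2.le⟩) (csSup_mem_closure ⟨x, hxS⟩ hSb)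
  have hne : ∀ z, f x * f z < 0 → z ≠ sSup S := fun z hz h => (h ▸ hz).not_ge ht.2
  refine ⟨sSup S, ⟨le_csSup hSb hxS, ht.1.2.lt_of_ne (hne y hxy.2).symm⟩,
    fun w hw => not_lt.1 fun hpos => ?_, fun z hz hneg => ?_⟩
  · exact hw.1.not_ge (le_csSup hSb ⟨⟨(le_csSup hSb hxS).trans hw.1.le, hw.2⟩, hpos⟩)
  · obtain ⟨w, hwS, hzw⟩ := exists_lt_of_lt_csSup ⟨x, hxS⟩ (hz.2.lt_of_ne (hne z hneg))
    exact ⟨w, ⟨hzw, hwS.1.2.lt_of_ne fun h => (h ▸ hwS.2).not_gt hxy.2⟩, hwS.2⟩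

theorem mul_nonneg_of_forall_length_le_one
    (hmax : ∀ l, IsSignChainIn f s l → l.length ≤ 1) {x z : ℝ} (hx : x ∈ s) (hz : z ∈ s) :
    0 ≤ f x * f z := by
  by_contra! hneg
  rcases lt_trichotomy z x with h | rfl | h
  · simpa using hmax [z, x] ⟨by simp [hz, hx], List.isChain_pair.2 ⟨h, by linarith⟩⟩
  · nlinarith [mul_self_nonneg (f z)]
  · simpa using hmax [x, z] ⟨by simp [hz, hx], List.isChain_pair.2 ⟨h, hneg⟩⟩

theorem mul_nonneg_of_le_last_point (hs : s.OrdConnected) {x₀ x₁ t z : ℝ} {l : List ℝ}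
    (hl : IsSignChainIn f s (x₀ :: x₁ :: l))
    (hmax : ∀ l', IsSignChainIn f s l' → l'.length ≤ l.length + 2)
    (hbefore : ∀ z ∈ Icc x₀ t, f x₀ * f z < 0 → ∃ w ∈ Ioo z x₁, 0 < f x₀ * f w)
    (hz : z ∈ s) (hzt : z ≤ t) : 0 ≤ f x₀ * f z := by
  obtain ⟨hls, hchain⟩ := hl
  have h01 := (List.isChain_cons_cons.1 hchain).1
  have hx₀ := hls x₀ (by simp)
  by_contra! hneg
  rcases lt_or_ge z x₀ with hzx₀ | hx₀z
  · have := hmax (z :: x₀ :: x₁ :: l) ⟨List.forall_mem_cons.2 ⟨hz, hls⟩,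
      hchain.cons (by simpa using ⟨hzx₀, by linarith⟩)⟩
    simp at this
  obtain ⟨w, hw, hpos⟩ := hbefore z ⟨hx₀z, hzt⟩ hneg
  have hx₀z' : x₀ < z := hx₀z.lt_of_ne (by rintro rfl; nlinarith [mul_self_nonneg (f x₀)])
  have hws : w ∈ s := hs.out hx₀ (hls x₁ (by simp)) ⟨hx₀z.trans hw.1.le, hw.2.le⟩
  have := hmax (x₀ :: z :: w :: x₁ :: l)
    ⟨List.forall_mem_cons.2 ⟨hx₀, List.forall_mem_cons.2 ⟨hz, List.forall_mem_cons.2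
      ⟨hws, fun x hx => hls x (List.mem_cons_of_mem _ hx)⟩⟩⟩,
    List.isChain_cons_cons.2 ⟨⟨hx₀z', hneg⟩, List.isChain_cons_cons.2
      ⟨⟨hw.1, by nlinarith [mul_self_nonneg (f x₀)]⟩, List.isChain_cons_cons.2
      ⟨⟨hw.2, by nlinarith [h01.2, mul_self_nonneg (f x₀)]⟩, (List.isChain_cons_cons.1 hchain).2⟩⟩⟩⟩
  simp at this

theorem length_le_of_isSignChainIn_Ioi {x₀ x₁ t : ℝ} {l : List ℝ}
    (hl : IsSignChainIn f s (x₀ :: x₁ :: l))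
    (hmax : ∀ l', IsSignChainIn f s l' → l'.length ≤ l.length + 2) (hx₀t : x₀ ≤ t)
    (hafter : ∀ w ∈ Ioc t x₁, f x₀ * f w ≤ 0) :
    ∀ l', IsSignChainIn f (s ∩ Ioi t) l' → l'.length ≤ l.length + 1 := by
  obtain ⟨hls, hchain⟩ := hl
  have h01 := (List.isChain_cons_cons.1 hchain).1
  rintro l' ⟨hl's, hl'⟩
  by_contra! hlong
  obtain _ | ⟨y₀, _ | ⟨y₁, l'⟩⟩ := l'
  · simp at hlong
  · simp at hlong
  have hy₀ := hl's y₀ (by simp)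
  have hy₀y₁ := (List.isChain_cons_cons.1 hl').1
  have hlong' : l.length + 2 < (y₀ :: y₁ :: l').length + 1 := by simpa using hlong
  rcases lt_or_gt_of_ne (mul_ne_zero (left_ne_zero_of_mul h01.2.ne)
    (left_ne_zero_of_mul hy₀y₁.2.ne)) with hneg | hpos
  · have := hmax (x₀ :: y₀ :: y₁ :: l')
      ⟨List.forall_mem_cons.2 ⟨hls x₀ (by simp), fun x hx => (hl's x hx).1⟩,
        hl'.cons fun y hy => (Option.mem_some_iff.1 hy) ▸ ⟨hx₀t.trans_lt hy₀.2, hneg⟩⟩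
    simp only [List.length_cons] at this hlong'
    omega
  · have hx₁y₀ : x₁ < y₀ := lt_of_not_ge fun h => (hafter y₀ ⟨hy₀.2, h⟩).not_gt hpos
    have := hmax (x₁ :: y₀ :: y₁ :: l')
      ⟨List.forall_mem_cons.2 ⟨hls x₁ (by simp), fun x hx => (hl's x hx).1⟩,
        hl'.cons fun y hy => (Option.mem_some_iff.1 hy) ▸
          ⟨hx₁y₀, by nlinarith [h01.2, mul_self_nonneg (f x₀)]⟩⟩
    simp only [List.length_cons] at this hlong'
    omega

theorem exists_alternatingSign_of_isSignChainIn_maximal (hs : s.OrdConnected)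
    (hf : ContinuousOn f s) (l : List ℝ) {x₀ : ℝ} (hl : IsSignChainIn f s (x₀ :: l))
    (hmax : ∀ l', IsSignChainIn f s l' → l'.length ≤ l.length + 1) :
    ∃ T : Finset ℝ, #T ≤ l.length ∧ ↑T ⊆ {t ∈ s | ∃ y ∈ s, t < y} ∧
      ∀ z ∈ s, 0 ≤ f x₀ * alternatingSign T z * f z := by
  induction l generalizing x₀ s with
  | nil =>
    refine ⟨∅, le_rfl, by simp, fun z hz => ?_⟩
    rw [alternatingSign_of_forall_le (by simp), mul_one]
    exact mul_nonneg_of_forall_length_le_one hmax (hl.1 x₀ (by simp)) hz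
  | cons x₁ l ih =>
    obtain ⟨h01, hchain⟩ := List.isChain_cons_cons.1 hl.2
    have hx₀ := hl.1 x₀ (by simp)
    have hx₁ := hl.1 x₁ (by simp)
    obtain ⟨t, ⟨hx₀t, htx₁⟩, hafter, hbefore⟩ := exists_last_point_of_sign hs hf hx₀ hx₁ h01
    have hsorted := List.isChain_iff_pairwise.1 (hchain.imp fun _ _ h => h.1)
    have htail : IsSignChainIn f (s ∩ Ioi t) (x₁ :: l) := by
      refine ⟨fun x hx => ⟨hl.1 x (List.mem_cons_of_mem _ hx), ?_⟩, hchain⟩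
      rcases List.mem_cons.1 hx with rfl | hx
      exacts [htx₁, htx₁.trans (List.rel_of_pairwise_cons hsorted hx)]
    obtain ⟨T, hTcard, hTs, hTsign⟩ := ih (hs.inter ordConnected_Ioi)
      (hf.mono inter_subset_left) htail (length_le_of_isSignChainIn_Ioi hl hmax hx₀t hafter)
    have hTt : ∀ t' ∈ T, t < t' := fun t' ht' => (hTs ht').1.2
    refine ⟨insert t T, ?_, ?_, fun z hz => ?_⟩
    · simpa [Finset.card_insert_of_notMem fun h => lt_irrefl t (hTt t h)] using hTcard
    · rw [Finset.coe_insert]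
      refine insert_subset ⟨hs.out hx₀ hx₁ ⟨hx₀t, htx₁.le⟩, x₁, hx₁, htx₁⟩ fun t' ht' => ?_
      obtain ⟨⟨ht's, -⟩, y, hy, hty⟩ := hTs ht'
      exact ⟨ht's, y, hy.1, hty⟩
    rcases le_or_gt z t with hzt | htz
    · rw [alternatingSign_of_forall_le fun t' ht' => ?_, mul_one]
      · exact mul_nonneg_of_le_last_point hs hl hmax hbefore hz hzt
      rcases Finset.mem_insert.1 ht' with rfl | ht'
      exacts [hzt, hzt.trans (hTt t' ht').le]
    · rw [alternatingSign_insert_of_lt (fun h => lt_irrefl t (hTt t h)) htz]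
      have hx₁sq : 0 < f x₁ * f x₁ := mul_self_pos.2 (right_ne_zero_of_mul h01.2.ne)
      nlinarith [mul_nonpos_of_nonpos_of_nonneg h01.2.le (hTsign z ⟨hz, htz⟩)]

end SignChain

theorem intervalIntegral_mul_pos {u v : ℝ → ℝ} {a b : ℝ} (hab : a < b)
    (hu : ContinuousOn u (Icc a b)) (hv : ContinuousOn v (Icc a b))
    (huv : ∀ z ∈ Icc a b, 0 ≤ u z * v z) (hv0 : {z ∈ Icc a b | v z = 0}.Finite)
    (hu0 : ∃ z ∈ Icc a b, u z ≠ 0) : 0 < ∫ z in a..b, u z * v z := by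
  obtain ⟨z₀, hz₀, hu₀⟩ := hu0
  refine (intervalIntegral.integral_nonneg hab.le huv).lt_of_ne fun h => hu₀ ?_
  rw [intervalIntegral.integral_of_le hab.le, ← integral_Icc_eq_integral_Ioc, eq_comm,
    setIntegral_eq_zero_iff_of_nonneg_ae ((ae_restrict_iff' measurableSet_Icc).2 (.of_forall huv))
      ((hu.mul hv).integrableOn_compact isCompact_Icc)] at h
  have hv_ae : ∀ᵐ z ∂volume.restrict (Icc a b), v z ≠ 0 := by
    rw [ae_restrict_iff' measurableSet_Icc]
    filter_upwards [measure_eq_zero_iff_ae_notMem.1 (hv0.measure_zero volume)] with z hz hzI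
    exact fun h0 => hz ⟨hzI, h0⟩
  have hu_ae : u =ᵐ[volume.restrict (Icc a b)] 0 := by
    filter_upwards [h, hv_ae] with z hz hvz
    exact (mul_eq_zero.1 hz).resolve_right hvz
  exact Measure.eqOn_Icc_of_ae_eq volume hab.ne hu_ae hu continuousOn_const hz₀

theorem intervalIntegral_mul_sum_eq_zero {n : ℕ} {f ρ : ℝ → ℝ} {F : Fin n → ℝ → ℝ} {a b : ℝ}
    (hint : ∀ j, IntervalIntegrable (fun x => f x * F j x * ρ x) volume a b)
    (horth : ∀ j, ∫ x in a..b, f x * F j x * ρ x = 0) (c : Fin n → ℝ) :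
    ∫ x in a..b, f x * (∑ j, c j * F j x) * ρ x = 0 := by
  have hexpand : ∀ x, f x * (∑ j, c j * F j x) * ρ x = ∑ j, c j * (f x * F j x * ρ x) :=
    fun x => by rw [Finset.mul_sum, Finset.sum_mul]; exact Finset.sum_congr rfl fun j _ => by ring
  simp_rw [hexpand]
  rw [intervalIntegral.integral_finsetSum fun j _ => (hint j).const_mul (c j)]
  simp [horth]

/-- If a continuous function `f` on `[a,b]` is orthogonal, with a nonnegative continuous
weight `ρ` (with `f·ρ` not identically zero), to a Chebyshev system `F` of order `n`
on `[a,b]`, then `f` changes sign at least `n` times in `[a,b]`. -/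
theorem orthogonal_to_chebyshev_sign_changes
    (n : ℕ) (a b : ℝ) (hab : a < b) (F : Fin n → ℝ → ℝ)
    (hF : ∀ j, ContinuousOn (F j) (Set.Icc a b))
    (hcheb : ∀ c : Fin n → ℝ, c ≠ 0 →
      {x ∈ Set.Icc a b | ∑ j, c j * F j x = 0}.encard ≤ (n - 1 : ℕ))
    (ρ : ℝ → ℝ) (hρc : ContinuousOn ρ (Set.Icc a b))
    (hρ0 : ∀ x ∈ Set.Icc a b, 0 ≤ ρ x)
    (f : ℝ → ℝ) (hf : ContinuousOn f (Set.Icc a b))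
    (hne : ∃ x ∈ Set.Icc a b, f x * ρ x ≠ 0)
    (horth : ∀ j, ∫ x in a..b, f x * F j x * ρ x = 0) :
    ∃ x : Fin (n + 1) → ℝ, StrictMono x ∧ (∀ i, x i ∈ Set.Icc a b) ∧
      ∀ i : Fin n, f (x i.castSucc) * f (x i.succ) < 0 := by
  obtain ⟨x₁, hx₁, hfρ⟩ := hne
  by_contra hno
  have hlen : ∀ l, IsSignChainIn f (Icc a b) l → l.length ≤ n := fun l hl =>
    not_lt.1 fun h => hno (hl.exists_strictMono h)
  obtain ⟨x₀, l, hl, hfx₀, hmax⟩ :=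
    exists_isSignChainIn_maximal hlen hx₁ (left_ne_zero_of_mul hfρ)
  obtain ⟨T, hTcard, hTs, hfsign⟩ :=
    exists_alternatingSign_of_isSignChainIn_maximal ordConnected_Icc hf l hl hmax
  have hln : l.length + 1 ≤ n := by simpa using hlen _ hl
  obtain ⟨m, rfl⟩ : ∃ m, n = m + 1 := ⟨n - 1, by omega⟩
  have hT : ↑T ⊆ Ico a b := fun t ht =>
    let ⟨hta, _, hy, hty⟩ := hTs ht; ⟨hta.1, hty.trans_le hy.2⟩
  obtain ⟨c, hc0, hgsign⟩ := IsChebyshevSystemOn.exists_alternatingSign_mul_nonneg hcheb hF hab hT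
    (by omega)
  set g : ℝ → ℝ := fun z => ∑ j, c j * F j z
  have hsign : ∀ z ∈ Icc a b, 0 ≤ f x₀ * (f z * ρ z) * g z := fun z hz => by
    have := mul_nonneg (mul_nonneg (hfsign z hz) (hgsign z hz)) (hρ0 z hz)
    linear_combination this + f x₀ * f z * ρ z * g z * alternatingSign_mul_self (T := T) (z := z)
  have hzero : ∫ z in a..b, f x₀ * (f z * ρ z) * g z = 0 := by
    simp_rw [show ∀ z, f x₀ * (f z * ρ z) * g z = f x₀ * (f z * g z * ρ z) from fun z => by ring]
    rw [intervalIntegral.integral_const_mul, intervalIntegral_mul_sum_eq_zero (fun j =>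
      ((hf.mul (hF j)).mul hρc).intervalIntegrable_of_Icc hab.le) horth c, mul_zero]
  refine (intervalIntegral_mul_pos hab (continuousOn_const.mul (hf.mul hρc))
    (continuousOn_finsetSum _ fun j _ => continuousOn_const.mul (hF j)) hsign
    (Set.finite_of_encard_le_coe (hcheb c hc0)) ⟨x₁, hx₁, mul_ne_zero hfx₀ hfρ⟩).ne' hzero
end

section
/- (Converse of the theorem on sign changes, circle case) Let n be odd and let f₁, …, f_n be continuous 2π-periodic functions forming a Chebyshev system of order n on the circle. Let f : ℝ → ℝ be continuous and 2π-periodic and suppose f changes sign at least n+1 times per period. Then there exists a continuous 2π-periodic function ρ : ℝ → ℝ with ρ ≥ 0 and f·ρ not identically zero such that ∫_0^{2π} f(x)·f_j(x)·ρ(x) dx = 0 for every j = 1, …, n. -/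
/-!
Put narrow nonnegative periodic bumps φᵢ at the points tᵢ where `f` alternates in sign, and let
vᵢ ∈ ℝⁿ be the moments vᵢⱼ = ∫ f Fⱼ φᵢ. If 0 is a convex combination ∑ wᵢ vᵢ, the weight
ρ = ∑ wᵢ φᵢ works. Otherwise Gordan's alternative gives c with ⟨c, vᵢ⟩ = ∫ f g φᵢ > 0 for
g = ∑ cⱼ Fⱼ, so near each tᵢ the function g takes the sign of f(tᵢ). These n + 1 alternations
within one period force n zeros of the nontrivial combination g, against the Chebyshev property.
-/

open Real Set Filter Topology

theorem exists_int_abs_sub_mul_two_pi_lt_of_cos_lt {ε u : ℝ} (hε : 0 ≤ ε)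
    (h : cos ε < cos u) : ∃ k : ℤ, |u - k * (2 * π)| < ε := by
  refine ⟨round (u / (2 * π)), ?_⟩
  have hle : |u - round (u / (2 * π)) * (2 * π)| ≤ π := by
    have hround := abs_sub_round (u / (2 * π))
    rw [show u - round (u / (2 * π)) * (2 * π) = (u / (2 * π) - round (u / (2 * π))) * (2 * π)
      by field_simp, abs_mul, abs_of_pos two_pi_pos]
    nlinarith [pi_pos]
  by_contra! hge
  have := cos_le_cos_of_nonneg_of_le_pi hε hle hge
  rw [cos_abs, cos_sub_int_mul_two_pi] at this
  linarith

theorem exists_mem_Icc_pos_of_intervalIntegral_pos {h : ℝ → ℝ} {a b : ℝ} (hab : a ≤ b)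
    (hpos : 0 < ∫ x in a..b, h x) : ∃ x ∈ Icc a b, 0 < h x := by
  by_contra! H
  have : 0 ≤ ∫ x in a..b, -h x :=
    intervalIntegral.integral_nonneg hab fun x hx => neg_nonneg.2 (H x hx)
  rw [intervalIntegral.integral_neg] at this
  linarith

theorem exists_mem_Ioo_eq_zero_of_mul_neg {g : ℝ → ℝ} {a b : ℝ} (hab : a ≤ b)
    (hg : ContinuousOn g (Icc a b)) (h : g a * g b < 0) : ∃ z ∈ Ioo a b, g z = 0 := by
  rcases mul_neg_iff.1 h with ⟨ha, hb⟩ | ⟨ha, hb⟩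
  · exact intermediate_value_Ioo' hab hg ⟨hb, ha⟩
  · exact intermediate_value_Ioo hab hg ⟨ha, hb⟩

theorem exists_strictMono_zeros_of_alternating {g : ℝ → ℝ} (hg : Continuous g) {n : ℕ}
    {x : Fin (n + 1) → ℝ} (hx : Monotone x)
    (halt : ∀ i : Fin n, g (x i.castSucc) * g (x i.succ) < 0) :
    ∃ z : Fin n → ℝ, StrictMono z ∧ ∀ i, z i ∈ Ioo (x i.castSucc) (x i.succ) ∧ g (z i) = 0 := by
  choose z hz hgz using fun i : Fin n =>
    exists_mem_Ioo_eq_zero_of_mul_neg (hx (Fin.castSucc_le_succ i)) hg.continuousOn (halt i)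
  refine ⟨z, fun i j hij => ?_, fun i => ⟨hz i, hgz i⟩⟩
  calc z i < x i.succ := (hz i).2
    _ ≤ x j.castSucc := hx (Fin.succ_le_castSucc_iff.2 hij)
    _ < z j := (hz j).1

theorem Function.Periodic.encard_zeros_Ico_le {g : ℝ → ℝ} {p : ℝ} (hg : g.Periodic p)
    (hp : 0 < p) (a b : ℝ) :
    {x ∈ Ico a (a + p) | g x = 0}.encard ≤ {x ∈ Ico b (b + p) | g x = 0}.encard := by
  refine encard_le_encard_of_injOn (f := toIcoMod hp b)
    (fun x hx => ⟨toIcoMod_mem_Ico hp b x, ?_⟩) fun x hx y hy hxy => ?_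
  · rw [← self_sub_toIcoDiv_zsmul, hg.sub_zsmul_eq]
    exact hx.2
  · calc x = toIcoMod hp a x := ((toIcoMod_eq_self hp).2 hx.1).symm
      _ = toIcoMod hp a y := (toIcoMod_eq_toIcoMod hp).2 ((toIcoMod_eq_toIcoMod hp).1 hxy)
      _ = y := (toIcoMod_eq_self hp).2 hy.1

theorem Function.Periodic.le_encard_zeros_of_alternating {g : ℝ → ℝ} {p : ℝ}
    (hg : g.Periodic p) (hp : 0 < p) (hgc : Continuous g) {n : ℕ} {x : Fin (n + 1) → ℝ}
    (hx : Monotone x) (hspan : x (Fin.last n) < x 0 + p)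
    (halt : ∀ i : Fin n, g (x i.castSucc) * g (x i.succ) < 0) (b : ℝ) :
    (n : ℕ∞) ≤ {y ∈ Ico b (b + p) | g y = 0}.encard := by
  obtain ⟨z, hz_mono, hz⟩ := exists_strictMono_zeros_of_alternating hgc hx halt
  have hz_mem : ∀ i, z i ∈ Ico (x 0) (x 0 + p) := fun i =>
    ⟨(hx (Fin.zero_le _)).trans (hz i).1.1.le,
      (hz i).1.2.trans_le (hx (Fin.le_last _)) |>.trans hspan⟩
  calc (n : ℕ∞) = ENat.card (Fin n) := by simp
    _ ≤ (range z).encard := hz_mono.injective.encard_range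
    _ ≤ {y ∈ Ico (x 0) (x 0 + p) | g y = 0}.encard :=
      encard_le_encard (range_subset_iff.2 fun i => ⟨hz_mem i, (hz i).2⟩)
    _ ≤ _ := hg.encard_zeros_Ico_le hp _ _

theorem exists_stdSimplex_sum_smul_eq_zero_or_exists_dotProduct_pos {ι m : Type*}
    [Fintype ι] [Fintype m] (v : ι → m → ℝ) :
    (∃ w ∈ stdSimplex ℝ ι, ∑ i, w i • v i = 0) ∨ ∃ c : m → ℝ, ∀ i, 0 < c ⬝ᵥ v i := by
  classical
  set T := Fintype.linearCombination ℝ v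
  by_cases h0 : (0 : m → ℝ) ∈ T '' stdSimplex ℝ ι
  · obtain ⟨w, hw, hw0⟩ := h0
    exact Or.inl ⟨w, hw, hw0⟩
  obtain ⟨c, u, hc0, hc⟩ := geometric_hahn_banach_point_closed
    ((convex_stdSimplex ℝ ι).linear_image T)
    ((isCompact_stdSimplex ℝ ι).image T.continuous_of_finiteDimensional).isClosed h0
  refine Or.inr ⟨fun j => c (Pi.single j 1), fun i => ?_⟩
  have hci := hc (v i) ⟨Pi.single i 1, single_mem_stdSimplex ℝ i, by simp [T]⟩
  have hcv : c (v i) = ∑ j, c (Pi.single j 1) * v i j := by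
    conv_lhs => rw [pi_eq_sum_univ' (v i)]
    simp [mul_comm]
  rw [map_zero] at hc0
  rw [hcv] at hci
  exact hc0.trans hci

theorem intervalIntegral_mul_sum {ι : Type*} [Fintype ι] {h : ℝ → ℝ} {φ : ι → ℝ → ℝ}
    (hh : Continuous h) (hφ : ∀ i, Continuous (φ i)) (w : ι → ℝ) (a b : ℝ) :
    ∫ x in a..b, h x * ∑ i, w i * φ i x = ∑ i, w i * ∫ x in a..b, h x * φ i x := by
  simp_rw [Finset.mul_sum, mul_left_comm (h _)]
  rw [intervalIntegral.integral_finsetSum fun i _ =>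
    (by fun_prop : Continuous fun x => w i * (h x * φ i x)).intervalIntegrable a b]
  simp_rw [intervalIntegral.integral_const_mul]

noncomputable def cosBump (ε a x : ℝ) : ℝ := max 0 (cos (x - a) - cos ε)

theorem continuous_cosBump (ε a : ℝ) : Continuous (cosBump ε a) := by
  unfold cosBump
  fun_prop

theorem cosBump_nonneg (ε a x : ℝ) : 0 ≤ cosBump ε a x := le_max_left _ _

theorem periodic_cosBump (ε a : ℝ) : (cosBump ε a).Periodic (2 * π) := fun x => by
  simp only [cosBump, add_sub_right_comm, cos_add_two_pi]

theorem cosBump_self_pos {ε : ℝ} (hε : 0 < ε) (hεπ : ε ≤ π) (a : ℝ) : 0 < cosBump ε a a := by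
  have := cos_lt_cos_of_nonneg_of_le_pi le_rfl hεπ hε
  rw [cos_zero] at this
  simpa [cosBump] using this

theorem exists_int_abs_sub_lt_of_cosBump_pos {ε a x : ℝ} (hε : 0 ≤ ε)
    (h : 0 < cosBump ε a x) : ∃ k : ℤ, |x - k * (2 * π) - a| < ε := by
  have hcos : cos ε < cos (x - a) := by simpa [cosBump] using h
  obtain ⟨k, hk⟩ := exists_int_abs_sub_mul_two_pi_lt_of_cos_lt hε hcos
  exact ⟨k, by rwa [sub_right_comm]⟩

theorem exists_abs_sub_lt_mul_pos_of_integral_cosBump_pos {f g : ℝ → ℝ} {ε a : ℝ}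
    (hf : f.Periodic (2 * π)) (hg : g.Periodic (2 * π)) (hε : 0 ≤ ε)
    (hsign : ∀ x, |x - a| < ε → 0 < f x * f a)
    (hint : 0 < ∫ x in (0)..(2 * π), f x * g x * cosBump ε a x) :
    ∃ x, |x - a| < ε ∧ 0 < f a * g x := by
  obtain ⟨y, -, hy⟩ := exists_mem_Icc_pos_of_intervalIntegral_pos two_pi_pos.le hint
  have hfg : 0 < f y * g y := pos_of_mul_pos_left hy (cosBump_nonneg ε a y)
  obtain ⟨k, hk⟩ := exists_int_abs_sub_lt_of_cosBump_pos hε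
    (pos_of_mul_pos_right hy hfg.le)
  refine ⟨y - k * (2 * π), hk, ?_⟩
  have hfa := hsign _ hk
  rw [hf.sub_int_mul_eq] at hfa
  rw [hg.sub_int_mul_eq]
  have : 0 < f y * f y * (f a * g y) := by linarith [mul_pos hfa hfg]
  exact pos_of_mul_pos_right this (mul_self_nonneg _)

theorem exists_weight_orthogonal_of_sum_smul_eq_zero {ι κ : Type*} [Fintype ι] {f : ℝ → ℝ}
    {F : κ → ℝ → ℝ} {φ : ι → ℝ → ℝ} {t : ι → ℝ} {p a b : ℝ}
    (hfc : Continuous f) (hFc : ∀ j, Continuous (F j)) (hφc : ∀ i, Continuous (φ i))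
    (hφper : ∀ i, (φ i).Periodic p) (hφnn : ∀ i x, 0 ≤ φ i x)
    (hft : ∀ i, f (t i) ≠ 0) (hφt : ∀ i, 0 < φ i (t i)) {w : ι → ℝ} (hw : w ∈ stdSimplex ℝ ι)
    (hw0 : ∑ i, w i • (fun j => ∫ x in a..b, f x * F j x * φ i x) = 0) :
    ∃ ρ : ℝ → ℝ, Continuous ρ ∧ ρ.Periodic p ∧ (∀ x, 0 ≤ ρ x) ∧ (∃ x, f x * ρ x ≠ 0) ∧
      ∀ j, ∫ x in a..b, f x * F j x * ρ x = 0 := by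
  obtain ⟨i, -, hi⟩ : ∃ i ∈ Finset.univ, (0 : ι → ℝ) i < w i :=
    Finset.exists_lt_of_sum_lt (by simp [hw.2])
  have hρt : 0 < ∑ k, w k * φ k (t i) :=
    (mul_pos hi (hφt i)).trans_le <| Finset.single_le_sum
      (fun k _ => mul_nonneg (hw.1 k) (hφnn k (t i))) (Finset.mem_univ i)
  refine ⟨fun x => ∑ k, w k * φ k x, continuous_finsetSum _ fun k _ => (hφc k).const_mul _,
    fun x => by simp only [hφper _ x], fun x => Finset.sum_nonneg fun k _ =>
      mul_nonneg (hw.1 k) (hφnn k x), ⟨t i, mul_ne_zero (hft i) hρt.ne'⟩, fun j => ?_⟩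
  beta_reduce
  rw [intervalIntegral_mul_sum (h := fun x => f x * F j x) (hfc.mul (hFc j)) hφc]
  simpa using congrFun hw0 j

theorem le_encard_zeros_of_integral_cosBump_pos {f g : ℝ → ℝ} (hf : f.Periodic (2 * π))
    (hgc : Continuous g) (hg : g.Periodic (2 * π)) {n : ℕ} {t : Fin (n + 1) → ℝ}
    (ht_alt : ∀ i : Fin n, f (t i.castSucc) * f (t i.succ) < 0) {ε : ℝ} (hε : 0 ≤ ε)
    (hsign : ∀ i x, |x - t i| < ε → 0 < f x * f (t i))
    (hgap : ∀ i : Fin n, t i.castSucc + 2 * ε < t i.succ)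
    (hspan : t (Fin.last n) + 2 * ε < t 0 + 2 * π)
    (hint : ∀ i, 0 < ∫ x in (0)..(2 * π), f x * g x * cosBump ε (t i) x) :
    (n : ℕ∞) ≤ {x ∈ Ico 0 (2 * π) | g x = 0}.encard := by
  choose x hx_near hx_sign using fun i =>
    exists_abs_sub_lt_mul_pos_of_integral_cosBump_pos hf hg hε (hsign i) (hint i)
  have hx_mono : Monotone x := Fin.monotone_iff_le_succ.2 fun i => by
    linarith [abs_lt.1 (hx_near i.castSucc), abs_lt.1 (hx_near i.succ), hgap i]
  have hg_alt : ∀ i : Fin n, g (x i.castSucc) * g (x i.succ) < 0 := fun i => by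
    nlinarith [mul_pos (hx_sign i.castSucc) (hx_sign i.succ), ht_alt i]
  simpa using hg.le_encard_zeros_of_alternating two_pi_pos hgc hx_mono
    (by linarith [abs_lt.1 (hx_near 0), abs_lt.1 (hx_near (Fin.last n))]) hg_alt 0

theorem exists_small_radius_of_sign_changes {f : ℝ → ℝ} (hfc : Continuous f) {n : ℕ}
    {t : Fin (n + 1) → ℝ} (ht_mono : StrictMono t) (ht_span : t (Fin.last n) < t 0 + 2 * π)
    (hft : ∀ i, f (t i) ≠ 0) :
    ∃ ε > 0, ε ≤ π ∧ (∀ i x, |x - t i| < ε → 0 < f x * f (t i)) ∧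
      (∀ i : Fin n, t i.castSucc + 2 * ε < t i.succ) ∧
      t (Fin.last n) + 2 * ε < t 0 + 2 * π := by
  have hsmall : ∀ {a b : ℝ}, a < b → ∀ᶠ ε in 𝓝 (0 : ℝ), a + 2 * ε < b := fun hab =>
    (eventually_lt_nhds (half_pos (sub_pos.2 hab))).mono fun ε hε => by linarith
  have hsign : ∀ i, ∀ᶠ ε in 𝓝 (0 : ℝ), ∀ x, |x - t i| < ε → 0 < f x * f (t i) := fun i =>
    (eventually_ball_subset ((hfc.mul continuous_const).continuousAt.preimage_mem_nhds
      (Ioi_mem_nhds (mul_self_pos.2 (hft i))))).mono fun ε hε x hx =>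
        hε (by rwa [Metric.mem_ball, Real.dist_eq])
  have hgap : ∀ i : Fin n, ∀ᶠ ε in 𝓝 (0 : ℝ), t i.castSucc + 2 * ε < t i.succ := fun i =>
    hsmall (ht_mono (Fin.castSucc_lt_succ (i := i)))
  obtain ⟨ε, hε, hε0⟩ := (((eventually_le_nhds pi_pos).and <| (eventually_all.2 hsign).and <|
    (eventually_all.2 hgap).and (hsmall ht_span)).filter_mono nhdsWithin_le_nhds |>.and
      (self_mem_nhdsWithin (s := Ioi 0))).exists
  exact ⟨ε, hε0, hε⟩

theorem exists_weight_orthogonal_of_sign_changes_circle_general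
    (n : ℕ) (F : Fin n → ℝ → ℝ)
    (hFc : ∀ j, Continuous (F j))
    (hFper : ∀ j, Function.Periodic (F j) (2 * Real.pi))
    (hcheb : ∀ c : Fin n → ℝ, c ≠ 0 →
      {x ∈ Set.Ico 0 (2 * Real.pi) | ∑ j, c j * F j x = 0}.encard ≤ (n - 1 : ℕ))
    (f : ℝ → ℝ) (hfc : Continuous f) (hfper : Function.Periodic f (2 * Real.pi))
    (hsign : ∃ t : Fin (n + 1) → ℝ, StrictMono t ∧
      (∀ i, t i ∈ Set.Ico 0 (2 * Real.pi)) ∧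
      (∀ i : Fin n, f (t i.castSucc) * f (t i.succ) < 0) ∧
      f (t (Fin.last n)) * f (t 0) < 0) :
    ∃ ρ : ℝ → ℝ, Continuous ρ ∧ Function.Periodic ρ (2 * Real.pi) ∧ (∀ x, 0 ≤ ρ x) ∧
      (∃ x, f x * ρ x ≠ 0) ∧
      ∀ j, ∫ x in (0:ℝ)..(2 * Real.pi), f x * F j x * ρ x = 0 := by
  obtain ⟨t, ht_mono, ht_mem, ht_alt, ht_wrap⟩ := hsign
  have hft : ∀ i, f (t i) ≠ 0 :=
    Fin.lastCases (left_ne_zero_of_mul ht_wrap.ne) fun i => left_ne_zero_of_mul (ht_alt i).ne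
  obtain ⟨ε, hε, hεπ, hε_sign, hε_gap, hε_span⟩ := exists_small_radius_of_sign_changes hfc
    ht_mono (by linarith [(ht_mem (Fin.last n)).2, (ht_mem 0).1]) hft
  rcases exists_stdSimplex_sum_smul_eq_zero_or_exists_dotProduct_pos
    fun i j => ∫ x in (0)..(2 * π), f x * F j x * cosBump ε (t i) x with ⟨w, hw, hw0⟩ | ⟨c, hc⟩
  · exact exists_weight_orthogonal_of_sum_smul_eq_zero hfc hFc (fun i => continuous_cosBump ε (t i))
      (fun i => periodic_cosBump ε (t i)) (fun i => cosBump_nonneg ε (t i)) hft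
      (fun i => cosBump_self_pos hε hεπ (t i)) hw hw0
  set g : ℝ → ℝ := fun x => ∑ j, c j * F j x
  have hint : ∀ i, 0 < ∫ x in (0)..(2 * π), f x * g x * cosBump ε (t i) x := fun i => by
    convert hc i using 1
    calc _ = ∫ x in (0)..(2 * π), f x * cosBump ε (t i) x * g x := by
          simp_rw [mul_right_comm (f _) (g _)]
      _ = _ := intervalIntegral_mul_sum (h := fun x => f x * cosBump ε (t i) x)
          (hfc.mul (continuous_cosBump ε (t i))) hFc c _ _
      _ = _ := by simp_rw [dotProduct, mul_right_comm (f _) (cosBump _ _ _)]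
  obtain ⟨j, hj⟩ : ∃ j, c j ≠ 0 := by
    by_contra! hc0
    simpa [g, hc0] using hint 0
  have hzeros := le_encard_zeros_of_integral_cosBump_pos hfper (by fun_prop)
    (fun x => by simp only [g, hFper _ x]) ht_alt hε.le hε_sign hε_gap hε_span hint
  have := Nat.cast_le.1 (hzeros.trans (hcheb c fun h => hj (congrFun h j)))
  have := j.pos
  omega

/-- Converse of the theorem on sign changes (circle case): if a continuous
`2π`-periodic function `f` changes sign at least `n+1` times per period, then there
is a nonnegative continuous `2π`-periodic weight `ρ` with `f·ρ` not identically zero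
for which `f` is orthogonal to the given Chebyshev system of odd order `n` on the
circle. -/
theorem exists_weight_orthogonal_of_sign_changes_circle
    (n : ℕ) (hodd : Odd n) (F : Fin n → ℝ → ℝ)
    (hFc : ∀ j, Continuous (F j))
    (hFper : ∀ j, Function.Periodic (F j) (2 * Real.pi))
    (hcheb : ∀ c : Fin n → ℝ, c ≠ 0 →
      {x ∈ Set.Ico 0 (2 * Real.pi) | ∑ j, c j * F j x = 0}.encard ≤ (n - 1 : ℕ))
    (f : ℝ → ℝ) (hfc : Continuous f) (hfper : Function.Periodic f (2 * Real.pi))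
    (hsign : ∃ t : Fin (n + 1) → ℝ, StrictMono t ∧
      (∀ i, t i ∈ Set.Ico 0 (2 * Real.pi)) ∧
      (∀ i : Fin n, f (t i.castSucc) * f (t i.succ) < 0) ∧
      f (t (Fin.last n)) * f (t 0) < 0) :
    ∃ ρ : ℝ → ℝ, Continuous ρ ∧ Function.Periodic ρ (2 * Real.pi) ∧ (∀ x, 0 ≤ ρ x) ∧
      (∃ x, f x * ρ x ≠ 0) ∧
      ∀ j, ∫ x in (0:ℝ)..(2 * Real.pi), f x * F j x * ρ x = 0 :=
  exists_weight_orthogonal_of_sign_changes_circle_general n F hFc hFper hcheb f hfc hfper hsign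
end

section
/- (Sharpness, interval case) Let f₁, …, f_n be a Chebyshev system of order n on a compact interval [a,b] and let a < x₁ < x₂ < ⋯ < x_n < b be given points. Then there exists a continuous function f : [a,b] → ℝ such that f(x) = 0 exactly for x ∈ {x₁, …, x_n}, such that on the n+1 subintervals [a,x₁), (x₁,x₂), …, (x_n,b] determined by these points f is nonzero with alternating constant sign (i.e., there is ε ∈ {1,−1} with ε·(−1)^i·f(x) > 0 for all x in the interior of the i-th subinterval, i = 0, …, n), and such that ∫_a^b f(x)·f_j(x) dx = 0 for every j = 1, …, n. -/
/-!
Put `W t = ∏ₖ (t - xₖ)` and look for `f = W h` with `h > 0` continuous on `[a, b]`; zeros and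
signs of such an `f` are those of `W`, so only orthogonality has to be arranged. The moment
vectors `(∫ W h Fⱼ)ⱼ` of all admissible `h` form a convex cone, and it is open: replacing `h` by
`h + W ∑ cₖ Fₖ` moves the moments by `G c`, where the Gram matrix `G` of the `W Fⱼ` is invertible.
If `0` were not in the cone, a separating functional `c` would give `∫ h W ∑ cⱼ Fⱼ < 0` for all
`h > 0`, hence `W ∑ cⱼ Fⱼ ≤ 0` on `[a, b]`. Then `∑ cⱼ Fⱼ` vanishes at each sign change `xᵢ`
of `W`, i.e. at `n` points, contradicting the Chebyshev property.
-/

open Set Filter Topology intervalIntegral Matrix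

lemma eqOn_zero_of_nonneg_of_integral_nonpos {a b : ℝ} (hab : a < b) {q : ℝ → ℝ}
    (hq : ContinuousOn q (Icc a b)) (hq0 : ∀ t ∈ Icc a b, 0 ≤ q t)
    (hint : ∫ t in a..b, q t ≤ 0) : ∀ t ∈ Icc a b, q t = 0 := by
  by_contra! ⟨t, ht, hqt⟩
  exact hint.not_gt <| integral_pos hab hq (fun s hs ↦ hq0 s (Ioc_subset_Icc_self hs))
    ⟨t, ht, (hq0 t ht).lt_of_ne' hqt⟩

lemma nonpos_of_forall_integral_mul_nonpos {a b : ℝ} (hab : a < b) {q : ℝ → ℝ}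
    (hq : ContinuousOn q (Icc a b))
    (h : ∀ p : ℝ → ℝ, ContinuousOn p (Icc a b) → (∀ t ∈ Icc a b, 0 < p t) →
      ∫ t in a..b, p t * q t ≤ 0) :
    ∀ t ∈ Icc a b, q t ≤ 0 := by
  set r : ℝ → ℝ := fun t ↦ max (q t) 0
  have hr : ContinuousOn r (Icc a b) := hq.sup continuousOn_const
  have hrq : ∀ t, r t * q t = r t ^ 2 := fun t ↦ by
    rcases le_total (q t) 0 with h | h <;> simp [r, h, sq]
  have hsmall : ∀ ε > 0, ∫ t in a..b, r t ^ 2 ≤ -(ε * ∫ t in a..b, q t) := by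
    intro ε hε
    have hle := h (fun t ↦ ε + r t) (continuousOn_const.add hr) fun t _ ↦
      add_pos_of_pos_of_nonneg hε (le_max_right _ _)
    simp only [add_mul, hrq] at hle
    rw [integral_add (g := fun t ↦ r t ^ 2) ((hq.intervalIntegrable_of_Icc hab.le).const_mul ε)
      ((hr.pow 2).intervalIntegrable_of_Icc hab.le), integral_const_mul] at hle
    linarith
  have hzero : ∫ t in a..b, r t ^ 2 ≤ 0 := by
    have hlim : Tendsto (fun ε : ℝ ↦ -(ε * ∫ t in a..b, q t)) (𝓝[>] 0) (𝓝 0) :=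
      ((by fun_prop : Continuous fun ε : ℝ ↦ -(ε * ∫ t in a..b, q t)).tendsto' 0 0
        (by simp)).mono_left nhdsWithin_le_nhds
    exact ge_of_tendsto hlim (eventually_nhdsWithin_of_forall hsmall)
  intro t ht
  have := eqOn_zero_of_nonneg_of_integral_nonpos hab (hr.pow 2) (fun _ _ ↦ sq_nonneg _) hzero t ht
  simpa [r] using this

lemma eventually_forall_pos_of_continuousOn_prod {X Y : Type*} [TopologicalSpace X]
    [TopologicalSpace Y] {K : Set Y} (hK : IsCompact K) {φ : X × Y → ℝ}
    (hφ : ContinuousOn φ (univ ×ˢ K)) {x₀ : X} (hpos : ∀ y ∈ K, 0 < φ (x₀, y)) :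
    ∀ᶠ x in 𝓝 x₀, ∀ y ∈ K, 0 < φ (x, y) := by
  have := hK.eventually_forall_of_forall_eventually (x₀ := x₀)
    (P := fun x y ↦ y ∈ K → 0 < φ (x, y)) fun y hy ↦ ?_
  · exact this.mono fun x hx y hy ↦ hx y hy hy
  have := (hφ (x₀, y) ⟨trivial, hy⟩).eventually (lt_mem_nhds (hpos y hy))
  rw [eventually_nhdsWithin_iff] at this
  exact this.mono fun z hz hz₂ ↦ hz ⟨trivial, hz₂⟩

section Moments

variable {ι : Type*} {a b : ℝ} {F : ι → ℝ → ℝ} {w : ℝ → ℝ}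

lemma continuousOn_sum_const_mul [Fintype ι] {s : Set ℝ} (hF : ∀ j, ContinuousOn (F j) s)
    (c : ι → ℝ) : ContinuousOn (fun t ↦ ∑ j, c j * F j t) s :=
  continuousOn_finsetSum _ fun j _ ↦ continuousOn_const.mul (hF j)

noncomputable def moments (a b : ℝ) (F : ι → ℝ → ℝ) (g : ℝ → ℝ) : ι → ℝ :=
  fun j ↦ ∫ t in a..b, g t * F j t

lemma moments_add (hab : a ≤ b) (hF : ∀ j, ContinuousOn (F j) (Icc a b)) {g₁ g₂ : ℝ → ℝ}
    (hg₁ : ContinuousOn g₁ (Icc a b)) (hg₂ : ContinuousOn g₂ (Icc a b)) :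
    moments a b F (fun t ↦ g₁ t + g₂ t) = moments a b F g₁ + moments a b F g₂ := by
  funext j
  simp only [moments, Pi.add_apply, add_mul]
  exact integral_add ((hg₁.mul (hF j)).intervalIntegrable_of_Icc hab)
    ((hg₂.mul (hF j)).intervalIntegrable_of_Icc hab)

lemma moments_const_mul (r : ℝ) (g : ℝ → ℝ) :
    moments a b F (fun t ↦ r * g t) = r • moments a b F g := by
  funext j
  simp only [moments, Pi.smul_apply, smul_eq_mul, mul_assoc, integral_const_mul]

lemma sum_mul_moments [Fintype ι] (hab : a ≤ b) (hF : ∀ j, ContinuousOn (F j) (Icc a b))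
    {g : ℝ → ℝ} (hg : ContinuousOn g (Icc a b)) (c : ι → ℝ) :
    ∑ j, c j * moments a b F g j = ∫ t in a..b, g t * ∑ j, c j * F j t := by
  simp only [moments, ← integral_const_mul]
  rw [← integral_finsetSum (f := fun j t ↦ c j * (g t * F j t)) fun j _ ↦
    (((hg.mul (hF j)).intervalIntegrable_of_Icc hab).const_mul (c j))]
  simp only [Finset.mul_sum]
  exact integral_congr fun t _ ↦ Finset.sum_congr rfl fun j _ ↦ by ring

noncomputable def gramMatrix (a b : ℝ) (F : ι → ℝ → ℝ) (w : ℝ → ℝ) : Matrix ι ι ℝ :=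
  Matrix.of fun j k ↦ moments a b F (fun t ↦ w t ^ 2 * F j t) k

lemma gramMatrix_mulVec [Fintype ι] (hab : a ≤ b) (hF : ∀ j, ContinuousOn (F j) (Icc a b))
    (hw : ContinuousOn w (Icc a b)) (c : ι → ℝ) :
    gramMatrix a b F w *ᵥ c = moments a b F (fun t ↦ w t * (w t * ∑ k, c k * F k t)) := by
  funext j
  simp only [Matrix.mulVec, dotProduct, gramMatrix, Matrix.of_apply, mul_comm _ (c _)]
  rw [sum_mul_moments hab hF (g := fun t ↦ w t ^ 2 * F j t) ((hw.pow 2).mul (hF j))]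
  exact integral_congr fun t _ ↦ by ring

lemma gramMatrix_mulVec_injective [Fintype ι] (hab : a < b)
    (hF : ∀ j, ContinuousOn (F j) (Icc a b)) (hw : ContinuousOn w (Icc a b))
    (hnd : ∀ c : ι → ℝ, c ≠ 0 → ∃ t ∈ Icc a b, w t * ∑ j, c j * F j t ≠ 0) :
    Function.Injective (gramMatrix a b F w).mulVec := by
  have hu : ∀ c : ι → ℝ, ContinuousOn (fun t ↦ w t * ∑ j, c j * F j t) (Icc a b) := fun c ↦
    hw.mul (continuousOn_sum_const_mul hF c)
  refine (injective_iff_map_eq_zero (gramMatrix a b F w).mulVecLin).2 fun c hc ↦ ?_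
  by_contra hc0
  obtain ⟨t, ht, hne⟩ := hnd c hc0
  -- `c ⬝ᵥ G c = ∫ (w ∑ c_j F_j)²` for the Gram matrix `G`
  have hsq : ∫ s in a..b, (w s * ∑ j, c j * F j s) ^ 2 ≤ 0 := by
    have := sum_mul_moments hab.le hF (g := fun t ↦ w t * (w t * ∑ k, c k * F k t))
      (hw.mul (hu c)) c
    rw [← gramMatrix_mulVec hab.le hF hw, ← Matrix.mulVecLin_apply, hc] at this
    simp only [Pi.zero_apply, mul_zero, Finset.sum_const_zero] at this
    exact (integral_congr fun s _ ↦ by ring).trans_le this.symm.le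
  exact hne (pow_eq_zero_iff two_ne_zero |>.1 <|
    eqOn_zero_of_nonneg_of_integral_nonpos hab ((hu c).pow 2) (fun _ _ ↦ sq_nonneg _) hsq t ht)


def momentCone (a b : ℝ) (F : ι → ℝ → ℝ) (w : ℝ → ℝ) : Set (ι → ℝ) :=
  {v | ∃ h : ℝ → ℝ, ContinuousOn h (Icc a b) ∧ (∀ t ∈ Icc a b, 0 < h t) ∧
    moments a b F (fun t ↦ w t * h t) = v}

lemma convex_momentCone (hab : a ≤ b) (hF : ∀ j, ContinuousOn (F j) (Icc a b))
    (hw : ContinuousOn w (Icc a b)) : Convex ℝ (momentCone a b F w) := by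
  refine convex_iff_forall_pos.2 ?_
  rintro _ ⟨h₁, hh₁, hpos₁, rfl⟩ _ ⟨h₂, hh₂, hpos₂, rfl⟩ θ₁ θ₂ hθ₁ hθ₂ -
  refine ⟨fun t ↦ θ₁ * h₁ t + θ₂ * h₂ t,
    (continuousOn_const.mul hh₁).add (continuousOn_const.mul hh₂),
    fun t ht ↦ add_pos (mul_pos hθ₁ (hpos₁ t ht)) (mul_pos hθ₂ (hpos₂ t ht)), ?_⟩
  have hsplit : (fun t ↦ w t * (θ₁ * h₁ t + θ₂ * h₂ t)) =
      fun t ↦ θ₁ * (w t * h₁ t) + θ₂ * (w t * h₂ t) := by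
    funext t; ring
  rw [hsplit, moments_add hab hF (g₁ := fun t ↦ θ₁ * (w t * h₁ t))
    (g₂ := fun t ↦ θ₂ * (w t * h₂ t)) (continuousOn_const.mul (hw.mul hh₁))
    (continuousOn_const.mul (hw.mul hh₂)), moments_const_mul, moments_const_mul]

lemma isOpen_momentCone [Fintype ι] (hab : a < b) (hF : ∀ j, ContinuousOn (F j) (Icc a b))
    (hw : ContinuousOn w (Icc a b))
    (hnd : ∀ c : ι → ℝ, c ≠ 0 → ∃ t ∈ Icc a b, w t * ∑ j, c j * F j t ≠ 0) :
    IsOpen (momentCone a b F w) := by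
  rw [isOpen_iff_mem_nhds]
  rintro _ ⟨h₀, hh₀, hpos, rfl⟩
  set G := gramMatrix a b F w
  set φ : (ι → ℝ) × ℝ → ℝ := fun z ↦ h₀ z.2 + w z.2 * ∑ k, z.1 k * F k z.2
  have hφ : ContinuousOn φ (univ ×ˢ Icc a b) :=
    (hh₀.comp continuousOn_snd mapsTo_snd_prod).add
      ((hw.comp continuousOn_snd mapsTo_snd_prod).mul <| continuousOn_finsetSum _ fun k _ ↦
        ((continuous_apply k).comp continuous_fst).continuousOn.mul
          ((hF k).comp continuousOn_snd mapsTo_snd_prod))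
  have hφc : ∀ c, ContinuousOn (fun t ↦ φ (c, t)) (Icc a b) := fun c ↦
    hh₀.add (hw.mul (continuousOn_sum_const_mul hF c))
  have hsmall : ∀ᶠ c in 𝓝 (0 : ι → ℝ), ∀ t ∈ Icc a b, 0 < φ (c, t) :=
    eventually_forall_pos_of_continuousOn_prod isCompact_Icc hφ fun t ht ↦ by
      simpa [φ] using hpos t ht
  have hmove : ∀ c, moments a b F (fun t ↦ w t * φ (c, t)) =
      moments a b F (fun t ↦ w t * h₀ t) + G *ᵥ c := by
    intro c
    have hsplit : (fun t ↦ w t * φ (c, t)) =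
        fun t ↦ w t * h₀ t + w t * (w t * ∑ k, c k * F k t) := by
      funext t; simp only [φ]; ring
    rw [hsplit, moments_add hab.le hF (g₁ := fun t ↦ w t * h₀ t)
      (g₂ := fun t ↦ w t * (w t * ∑ k, c k * F k t)) (hw.mul hh₀)
      (hw.mul (hw.mul (continuousOn_sum_const_mul hF c))), gramMatrix_mulVec hab.le hF hw]
  have hG : IsOpenMap fun c ↦ moments a b F (fun t ↦ w t * h₀ t) + G *ᵥ c :=
    (Homeomorph.addLeft _).isOpenMap.comp <| G.mulVecLin.isOpenMap_of_finiteDimensional <|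
      LinearMap.injective_iff_surjective.1 (gramMatrix_mulVec_injective hab hF hw hnd)
  have := hG.image_mem_nhds hsmall
  simp only [mulVec_zero, add_zero] at this
  filter_upwards [this]
  rintro _ ⟨c, hc, rfl⟩
  exact ⟨_, hφc c, hc, hmove c⟩

theorem zero_mem_momentCone [Fintype ι] (hab : a < b) (hF : ∀ j, ContinuousOn (F j) (Icc a b))
    (hw : ContinuousOn w (Icc a b))
    (hpos : ∀ c : ι → ℝ, c ≠ 0 → ∃ t ∈ Icc a b, 0 < w t * ∑ j, c j * F j t) :
    0 ∈ momentCone a b F w := by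
  classical
  by_contra h0
  obtain ⟨φ, hφ⟩ := geometric_hahn_banach_open_point (convex_momentCone hab.le hF hw)
    (isOpen_momentCone hab hF hw fun c hc ↦
      (hpos c hc).imp fun t ⟨ht, hlt⟩ ↦ ⟨ht, hlt.ne'⟩) h0
  set c : ι → ℝ := fun j ↦ φ fun k ↦ if j = k then 1 else 0
  have hφc : ∀ v, φ v = ∑ j, c j * v j := fun v ↦
    (LinearMap.pi_apply_eq_sum_univ φ.toLinearMap v).trans <|
      Finset.sum_congr rfl fun j _ ↦ (smul_eq_mul _ _).trans (mul_comm _ _)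
  have hneg : ∀ h : ℝ → ℝ, ContinuousOn h (Icc a b) → (∀ t ∈ Icc a b, 0 < h t) →
      ∫ t in a..b, h t * (w t * ∑ j, c j * F j t) < 0 := by
    intro h hh hpos
    have := hφ _ ⟨h, hh, hpos, rfl⟩
    rw [map_zero, hφc, sum_mul_moments hab.le hF (g := fun t ↦ w t * h t) (hw.mul hh)] at this
    exact (integral_congr fun t _ ↦ by ring).trans_lt this
  have hc : c ≠ 0 := by
    intro hc
    have := hneg 1 continuousOn_const fun _ _ ↦ one_pos
    simp [hc] at this
  obtain ⟨t, ht, hlt⟩ := hpos c hc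
  exact hlt.not_ge <| nonpos_of_forall_integral_mul_nonpos hab
    (hw.mul (continuousOn_sum_const_mul hF c)) (fun h hh hpos ↦ (hneg h hh hpos).le) t ht

end Moments

lemma eq_zero_of_sub_mul_nonpos {q : ℝ → ℝ} {x₀ : ℝ} (hq : ContinuousAt q x₀)
    (h : ∀ᶠ t in 𝓝 x₀, (t - x₀) * q t ≤ 0) : q x₀ = 0 := by
  apply le_antisymm
  · refine le_of_tendsto (hq.mono_left nhdsWithin_le_nhds : Tendsto q (𝓝[>] x₀) _) ?_
    filter_upwards [nhdsWithin_le_nhds h, self_mem_nhdsWithin] with t ht (htx : x₀ < t)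
    nlinarith
  · refine ge_of_tendsto (hq.mono_left nhdsWithin_le_nhds : Tendsto q (𝓝[<] x₀) _) ?_
    filter_upwards [nhdsWithin_le_nhds h, self_mem_nhdsWithin] with t ht (htx : t < x₀)
    nlinarith

lemma exists_pos_prod_sub_mul_sum {n : ℕ} {a b : ℝ} {F : Fin n → ℝ → ℝ}
    (hF : ∀ j, ContinuousOn (F j) (Icc a b))
    (hcheb : ∀ c : Fin n → ℝ, c ≠ 0 →
      {x ∈ Icc a b | ∑ j, c j * F j x = 0}.encard ≤ (n - 1 : ℕ))
    {x : Fin n → ℝ} (hx : Function.Injective x) (hxmem : ∀ i, x i ∈ Ioo a b)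
    {c : Fin n → ℝ} (hc : c ≠ 0) :
    ∃ t ∈ Icc a b, 0 < (∏ k, (t - x k)) * ∑ j, c j * F j t := by
  by_contra! hle
  -- each node is a sign change of `∏ (t - x k)` but not of its product with the sum
  have hzero : ∀ i, ∑ j, c j * F j (x i) = 0 := by
    intro i
    have hnhds : Icc a b ∈ 𝓝 (x i) := Icc_mem_nhds (hxmem i).1 (hxmem i).2
    have hq : ContinuousOn (fun t ↦ (∏ k ∈ Finset.univ.erase i, (t - x k)) * ∑ j, c j * F j t)
        (Icc a b) :=
      (continuousOn_finsetProd _ fun k _ ↦ continuousOn_id.sub continuousOn_const).mul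
        (continuousOn_sum_const_mul hF c)
    have h0 := eq_zero_of_sub_mul_nonpos (hq.continuousAt hnhds) <| by
      filter_upwards [hnhds] with t ht
      rw [← mul_assoc, Finset.mul_prod_erase _ (fun k ↦ t - x k) (Finset.mem_univ i)]
      exact hle t ht
    refine (mul_eq_zero.1 h0).resolve_left <| Finset.prod_ne_zero_iff.2 fun k hk ↦ ?_
    exact sub_ne_zero.2 (hx.ne (Finset.ne_of_mem_erase hk).symm)
  have hsub : range x ⊆ {t ∈ Icc a b | ∑ j, c j * F j t = 0} := by
    rintro _ ⟨i, rfl⟩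
    exact ⟨Ioo_subset_Icc_self (hxmem i), hzero i⟩
  obtain ⟨j, -⟩ := Function.ne_iff.1 hc
  have := hx.encard_range.trans ((encard_le_encard hsub).trans (hcheb c hc))
  rw [ENat.card_eq_coe_fintype_card, Fintype.card_fin] at this
  norm_cast at this
  have := j.pos
  omega

lemma neg_one_pow_mul_prod_sub_pos {n i : ℕ} (hi : i ≤ n) {x : Fin n → ℝ} {t : ℝ}
    (hlt : ∀ k : Fin n, (k : ℕ) < i → x k < t) (hgt : ∀ k : Fin n, i ≤ (k : ℕ) → t < x k) :
    0 < (-1) ^ (n + i) * ∏ k, (t - x k) := by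
  classical
  have hsign : ∏ k : Fin n, (if (k : ℕ) < i then (1 : ℝ) else -1) = (-1) ^ (n + i) := by
    have hcard := Finset.card_filter_add_card_filter_not (s := Finset.univ)
      (fun k : Fin n ↦ (k : ℕ) < i)
    rw [Fin.card_filter_val_lt, Finset.card_univ, Fintype.card_fin] at hcard
    rw [Finset.prod_ite, Finset.prod_const_one, Finset.prod_const, one_mul,
      show n + i = (Finset.univ.filter fun k : Fin n ↦ ¬ (k : ℕ) < i).card + 2 * i by omega,
      pow_add, pow_mul, neg_one_sq, one_pow, mul_one]
  rw [← hsign, ← Finset.prod_mul_distrib]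
  refine Finset.prod_pos fun k _ ↦ ?_
  split_ifs with hk
  · linarith [hlt k hk]
  · linarith [hgt k (not_lt.1 hk)]

lemma mem_Ioo_cons_snoc {n : ℕ} {x : Fin n → ℝ} {a b t : ℝ}
    (hy : Monotone (Fin.cons a (Fin.snoc x b) : Fin (n + 2) → ℝ)) {i : Fin (n + 1)}
    (ht : t ∈ Ioo ((Fin.cons a (Fin.snoc x b) : Fin (n + 2) → ℝ) i.castSucc)
      ((Fin.cons a (Fin.snoc x b) : Fin (n + 2) → ℝ) i.succ)) :
    t ∈ Icc a b ∧ (∀ k : Fin n, (k : ℕ) < i → x k < t) ∧ ∀ k : Fin n, (i : ℕ) ≤ k → t < x k := by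
  set y : Fin (n + 2) → ℝ := Fin.cons a (Fin.snoc x b)
  have hyx : ∀ k : Fin n, y k.castSucc.succ = x k := by simp [y]
  have hyb : y (Fin.last _) = b := by simp [y]
  refine ⟨⟨(hy (Fin.zero_le _)).trans ht.1.le, ht.2.le.trans (hyb ▸ hy (Fin.le_last _))⟩,
    fun k hk ↦ ?_, fun k hk ↦ ?_⟩
  · rw [← hyx]
    exact (hy (Fin.le_def.2 (by simp; omega))).trans_lt ht.1
  · rw [← hyx]
    exact ht.2.trans_le (hy (Fin.le_def.2 (by simp; omega)))

lemma strictMono_cons_snoc {n : ℕ} {x : Fin n → ℝ} (hx : StrictMono x) {a b : ℝ}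
    (hxmem : ∀ i, x i ∈ Ioo a b) (hab : a < b) :
    StrictMono (Fin.cons a (Fin.snoc x b) : Fin (n + 2) → ℝ) := by
  rw [Fin.strictMono_cons, ← Fin.insertNth_last', Fin.strictMono_insertNth_iff]
  refine ⟨fun j ↦ ?_, hx, fun k _ ↦ (hxmem k).2, fun k hk ↦ absurd hk (by simp)⟩
  induction j using Fin.lastCases <;> simp [hab, (hxmem _).1]

/-- Sharpness (interval case): given a Chebyshev system of order `n` on `[a,b]` and
points `a < x₁ < ⋯ < xₙ < b`, there is a continuous function on `[a,b]` vanishing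
exactly at these points, with alternating nonzero constant sign on the `n+1`
subintervals they determine, which is orthogonal (weight `1`) to the system.
Here `y = Fin.cons a (Fin.snoc x b)` is the extended sequence
`a = y₀ < y₁ = x₁ < ⋯ < yₙ = xₙ < yₙ₊₁ = b`. -/
theorem exists_orthogonal_with_prescribed_sign_changes
    (n : ℕ) (a b : ℝ) (hab : a < b) (F : Fin n → ℝ → ℝ)
    (hF : ∀ j, ContinuousOn (F j) (Set.Icc a b))
    (hcheb : ∀ c : Fin n → ℝ, c ≠ 0 →
      {x ∈ Set.Icc a b | ∑ j, c j * F j x = 0}.encard ≤ (n - 1 : ℕ))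
    (x : Fin n → ℝ) (hx : StrictMono x) (hxmem : ∀ i, x i ∈ Set.Ioo a b) :
    ∃ f : ℝ → ℝ, ContinuousOn f (Set.Icc a b) ∧
      (∀ t ∈ Set.Icc a b, (f t = 0 ↔ ∃ i, x i = t)) ∧
      (∃ ε : ℝ, (ε = 1 ∨ ε = -1) ∧ ∀ i : Fin (n + 1),
        ∀ t ∈ Set.Ioo ((Fin.cons a (Fin.snoc x b) : Fin (n + 2) → ℝ) i.castSucc)
          ((Fin.cons a (Fin.snoc x b) : Fin (n + 2) → ℝ) i.succ),
          0 < ε * (-1) ^ (i : ℕ) * f t) ∧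
      ∀ j, ∫ t in a..b, f t * F j t = 0 := by
  have hW : Continuous fun t ↦ ∏ k, (t - x k) := by fun_prop
  obtain ⟨h, hh, hpos, hmom⟩ := zero_mem_momentCone hab hF hW.continuousOn
    fun c hc ↦ exists_pos_prod_sub_mul_sum hF hcheb hx.injective hxmem hc
  refine ⟨fun t ↦ (∏ k, (t - x k)) * h t, hW.continuousOn.mul hh, fun t ht ↦ ?_,
    ⟨(-1) ^ n, neg_one_pow_eq_or ℝ n, fun i t ht ↦ ?_⟩, congrFun hmom⟩
  · simp only [mul_eq_zero, (hpos t ht).ne', or_false, Finset.prod_eq_zero_iff, Finset.mem_univ,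
      true_and, sub_eq_zero]
    exact exists_congr fun _ ↦ eq_comm
  · obtain ⟨htab, hlt, hgt⟩ := mem_Ioo_cons_snoc (strictMono_cons_snoc hx hxmem hab).monotone ht
    have := mul_pos (neg_one_pow_mul_prod_sub_pos i.is_le hlt hgt) (hpos t htab)
    rw [pow_add] at this
    linarith
end

section
/- (Sharpness, circle case) Let n be odd, let f₁, …, f_n be continuous 2π-periodic functions forming a Chebyshev system of order n on the circle, and let 0 ≤ t₁ < t₂ < ⋯ < t_{n+1} < 2π be given points. Then there exists a continuous 2π-periodic function f : ℝ → ℝ whose zero set in [0, 2π) is exactly {t₁, …, t_{n+1}}, which has alternating nonzero constant sign on the n+1 open circular arcs determined by these points (there is ε ∈ {1,−1} with ε·(−1)^i·f(t) > 0 on the arc from t_i to t_{i+1}, indices taken cyclically; this alternation is consistent since n+1 is even), and such that ∫_0^{2π} f(x)·f_j(x) dx = 0 for every j = 1, …, n. -/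
/-!
The function `g x = ∏ₖ sin ((x - tₖ) / 2)` is `2π`-periodic because it has an even number
`n + 1` of factors; in `[0, 2π)` it vanishes exactly at the `tₖ` and changes sign at each of them.
We take `f = w * g` for a continuous positive `2π`-periodic weight `w`. The moment vectors
`(∫ w g Fⱼ)ⱼ` of such weights form a convex cone in `ℝⁿ`, which is all of `ℝⁿ` (so contains `0`)
unless it lies in a half-space `∑ⱼ cⱼ vⱼ ≤ 0` with `c ≠ 0`. That would mean `∫ w g h ≤ 0` for
`h = ∑ⱼ cⱼ Fⱼ` and every weight; the weight `(g h)⁺ + ε` then forces `g h ≤ 0`, so `h` vanishes at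
each of the `n + 1` sign changes of `g`, too many zeros for a Chebyshev system.
-/

open Set Function Topology Finset Real intervalIntegral

theorem ConvexCone.eq_top_of_forall_exists_pos {E : Type*} [NormedAddCommGroup E]
    [NormedSpace ℝ E] [FiniteDimensional ℝ E] (K : ConvexCone ℝ E) (hne : (K : Set E).Nonempty)
    (hK : ∀ φ : StrongDual ℝ E, φ ≠ 0 → ∃ v ∈ K, 0 < φ v) : K = ⊤ := by
  have hdense : closure (K : Set E) = univ := by
    refine eq_univ_of_forall fun p => by_contra fun hp => ?_
    obtain ⟨φ, u, hφ, hu⟩ := geometric_hahn_banach_closed_point K.convex.closure isClosed_closure hp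
    have hφ0 : φ ≠ 0 := by
      rintro rfl
      obtain ⟨v, hv⟩ := hne
      have hv' := hφ v (subset_closure hv)
      rw [zero_apply] at hv' hu
      linarith
    obtain ⟨v, hv, hφv⟩ := hK φ hφ0
    have hscaled := hφ _ (subset_closure (K.smul_mem (by positivity : 0 < (|u| + 1) / φ v) hv))
    rw [map_smul, smul_eq_mul, div_mul_cancel₀ _ hφv.ne'] at hscaled
    linarith [le_abs_self u]
  have hinterior : (interior (K : Set E)).Nonempty := by
    rw [K.convex.interior_nonempty_iff_affineSpan_eq_top, eq_top_iff]
    intro p _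
    have hspan : closure (K : Set E) ⊆ affineSpan ℝ (K : Set E) :=
      closure_minimal (subset_affineSpan ℝ _) (affineSpan ℝ _).closed_of_finiteDimensional
    exact hspan (hdense ▸ mem_univ p)
  rw [← SetLike.coe_set_eq, ConvexCone.coe_top, ← univ_subset_iff, ← interior_univ, ← hdense,
    K.convex.interior_closure_eq_interior_of_nonempty_interior hinterior]
  exact interior_subset

theorem exists_pos_add_mul_pos {A : ℝ} (hA : 0 < A) (B : ℝ) : ∃ ε > 0, 0 < A + ε * B := by
  refine ⟨A / (|B| + 1), by positivity, ?_⟩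
  have hB : 0 < |B| + B + 1 := by linarith [neg_abs_le B]
  rw [show A + A / (|B| + 1) * B = A * (|B| + B + 1) / (|B| + 1) by field_simp; ring]
  positivity

section PeriodicWeight

variable {T : ℝ} {ι : Type*} [Fintype ι]

/-- The weight `q⁺ + ε` works for small `ε`, since `∫ q⁺ q = ∫ (q⁺)² > 0`. -/
theorem exists_pos_periodic_weight_integral_mul_pos (hT : 0 < T) {q : ℝ → ℝ}
    (hq : Continuous q) (hqT : Periodic q T) {x₀ : ℝ} (hx₀ : 0 < q x₀) :
    ∃ w : ℝ → ℝ, Continuous w ∧ Periodic w T ∧ (∀ x, 0 < w x) ∧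
      0 < ∫ s in 0..T, w s * q s := by
  set p : ℝ → ℝ := fun x => max (q x) 0
  have hp : Continuous p := hq.max continuous_const
  have hpq : ∀ x, p x * q x = p x ^ 2 := fun x => by
    rcases le_total (q x) 0 with h | h <;> simp [p, h, sq]
  obtain ⟨y, hy, hxy⟩ := hqT.exists_mem_Ico₀ hT x₀
  have hA : 0 < ∫ s in 0..T, p s ^ 2 :=
    integral_pos hT (hp.pow 2).continuousOn (fun x _ => sq_nonneg _)
      ⟨y, Ico_subset_Icc_self hy, pow_pos (lt_max_of_lt_left (hxy ▸ hx₀)) 2⟩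
  obtain ⟨ε, hε, hpos⟩ := exists_pos_add_mul_pos hA (∫ s in 0..T, q s)
  refine ⟨fun x => p x + ε, hp.add continuous_const, fun x => by simp [p, hqT x],
    fun x => by positivity, ?_⟩
  have hsplit : ∀ s, (p s + ε) * q s = p s ^ 2 + ε * q s := fun s => by rw [add_mul, hpq]
  simp only [hsplit]
  rwa [integral_add (f := fun s => p s ^ 2) ((hp.pow 2).intervalIntegrable _ _)
    ((hq.const_mul ε).intervalIntegrable _ _), integral_const_mul]

def periodicWeightMomentCone (T : ℝ) {g : ℝ → ℝ} {F : ι → ℝ → ℝ} (hg : Continuous g)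
    (hF : ∀ j, Continuous (F j)) : ConvexCone ℝ (ι → ℝ) where
  carrier := {v | ∃ w : ℝ → ℝ, Continuous w ∧ Periodic w T ∧ (∀ x, 0 < w x) ∧
    ∀ j, v j = ∫ s in 0..T, w s * g s * F j s}
  smul_mem' := by
    rintro a ha v ⟨w, hwc, hwT, hwpos, hv⟩
    refine ⟨fun x => a * w x, continuous_const.mul hwc, fun x => by simp [hwT x],
      fun x => mul_pos ha (hwpos x), fun j => ?_⟩
    simp only [Pi.smul_apply, smul_eq_mul, hv, mul_assoc, integral_const_mul]
  add_mem' := by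
    rintro v₁ ⟨w₁, hw₁c, hw₁T, hw₁pos, hv₁⟩ v₂ ⟨w₂, hw₂c, hw₂T, hw₂pos, hv₂⟩
    refine ⟨fun x => w₁ x + w₂ x, hw₁c.add hw₂c, fun x => by simp [hw₁T x, hw₂T x],
      fun x => add_pos (hw₁pos x) (hw₂pos x), fun j => ?_⟩
    have hint : ∀ w : ℝ → ℝ, Continuous w →
        IntervalIntegrable (fun s => w s * g s * F j s) MeasureTheory.volume 0 T :=
      fun w hw => ((hw.mul hg).mul (hF j)).intervalIntegrable _ _
    simp only [Pi.add_apply, hv₁, hv₂, add_mul]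
    exact (integral_add (hint w₁ hw₁c) (hint w₂ hw₂c)).symm

theorem exists_pos_periodic_weight_orthogonal (hT : 0 < T) {g : ℝ → ℝ} (hg : Continuous g)
    (hgT : Periodic g T) {F : ι → ℝ → ℝ} (hF : ∀ j, Continuous (F j))
    (hFT : ∀ j, Periodic (F j) T)
    (hsign : ∀ c : ι → ℝ, c ≠ 0 → ∃ x, 0 < g x * ∑ j, c j * F j x) :
    ∃ w : ℝ → ℝ, Continuous w ∧ Periodic w T ∧ (∀ x, 0 < w x) ∧
      ∀ j, ∫ s in 0..T, w s * g s * F j s = 0 := by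
  classical
  set K := periodicWeightMomentCone T hg hF
  suffices hK : K = ⊤ by
    obtain ⟨w, hwc, hwT, hwpos, hw⟩ : (0 : ι → ℝ) ∈ K := hK ▸ trivial
    exact ⟨w, hwc, hwT, hwpos, fun j => (hw j).symm⟩
  refine K.eq_top_of_forall_exists_pos
    ⟨_, fun _ => 1, continuous_const, fun _ => rfl, fun _ => one_pos, fun _ => rfl⟩ fun φ hφ => ?_
  set c : ι → ℝ := fun j => φ fun i => if j = i then 1 else 0
  have hφc : ∀ v, φ v = ∑ j, v j * c j := fun v => by
    simpa [c] using (φ : (ι → ℝ) →ₗ[ℝ] ℝ).pi_apply_eq_sum_univ v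
  have hc : c ≠ 0 := fun hc => hφ (ContinuousLinearMap.ext fun v => by simp [hφc, hc])
  obtain ⟨x₀, hx₀⟩ := hsign c hc
  set h : ℝ → ℝ := fun x => ∑ j, c j * F j x
  have hh : Continuous h := continuous_finsetSum _ fun j _ => continuous_const.mul (hF j)
  have hhT : Periodic h T := fun x => by simp [h, fun j => hFT j x]
  obtain ⟨w, hwc, hwT, hwpos, hw⟩ :=
    exists_pos_periodic_weight_integral_mul_pos hT (hg.mul hh) (hgT.mul hhT) hx₀
  refine ⟨_, ⟨w, hwc, hwT, hwpos, fun j => rfl⟩, ?_⟩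
  calc 0 < ∫ s in 0..T, w s * (g s * h s) := hw
    _ = ∑ j, (∫ s in 0..T, w s * g s * F j s) * c j := by
      simp only [← integral_mul_const]
      rw [← integral_finsetSum (f := fun j s => w s * g s * F j s * c j) fun j _ =>
        (((hwc.mul hg).mul (hF j)).mul continuous_const).intervalIntegrable _ _]
      refine integral_congr fun s _ => ?_
      simp only [h, Finset.mul_sum]
      exact Finset.sum_congr rfl fun j _ => by ring
    _ = φ _ := (hφc _).symm

end PeriodicWeight

theorem neg_one_pow_card_mul_prod_pos {ι : Type*} [Fintype ι] [DecidableEq ι] (f : ι → ℝ)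
    (S : Finset ι) (hneg : ∀ k ∈ S, f k < 0) (hpos : ∀ k ∉ S, 0 < f k) :
    0 < (-1) ^ #S * ∏ k, f k := by
  rw [← prod_mul_prod_compl S f, ← mul_assoc, ← prod_const, ← prod_mul_distrib]
  exact mul_pos (prod_pos fun k hk => by linarith [hneg k hk])
    (prod_pos fun k hk => hpos k (mem_compl.1 hk))

theorem sin_half_sub_eq_zero_iff {x y : ℝ} (h : |x - y| < 2 * π) :
    sin ((x - y) / 2) = 0 ↔ x = y := by
  rw [abs_lt] at h
  rw [sin_eq_zero_iff_of_lt_of_lt (by linarith) (by linarith)]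
  constructor <;> intro h <;> linarith

theorem eq_zero_of_mul_nonpos_of_neg_of_pos {g h : ℝ → ℝ} {a : ℝ} (hh : ContinuousAt h a)
    (hgh : ∀ x, g x * h x ≤ 0) (hl : ∀ᶠ x in 𝓝[<] a, g x < 0)
    (hr : ∀ᶠ x in 𝓝[>] a, 0 < g x) : h a = 0 := by
  have hle : h a ≤ 0 := le_of_tendsto (hh.tendsto.mono_left nhdsWithin_le_nhds) <|
    hr.mono fun x hx => nonpos_of_mul_nonpos_right (hgh x) hx
  have hge : 0 ≤ h a := ge_of_tendsto (hh.tendsto.mono_left nhdsWithin_le_nhds) <|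
    hl.mono fun x hx => nonneg_of_mul_nonpos_right (hgh x) hx
  exact le_antisymm hle hge

section SinHalfProd

variable {ι : Type*} [Fintype ι]

noncomputable def sinHalfProd (t : ι → ℝ) (x : ℝ) : ℝ := ∏ k, sin ((x - t k) / 2)

theorem continuous_sinHalfProd (t : ι → ℝ) : Continuous (sinHalfProd t) := by
  unfold sinHalfProd; fun_prop

theorem periodic_sinHalfProd (t : ι → ℝ) (h : Even (Fintype.card ι)) :
    Periodic (sinHalfProd t) (2 * π) := fun x => by
  have hk : ∀ k, sin ((x + 2 * π - t k) / 2) = -1 * sin ((x - t k) / 2) := fun k => by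
    rw [show (x + 2 * π - t k) / 2 = (x - t k) / 2 + π by ring, sin_antiperiodic]; ring
  simp only [sinHalfProd, hk, prod_mul_distrib, prod_const, card_univ, h.neg_one_pow, one_mul]

theorem sinHalfProd_eq_zero_iff {t : ι → ℝ} {x : ℝ} (h : ∀ k, |x - t k| < 2 * π) :
    sinHalfProd t x = 0 ↔ ∃ k, t k = x := by
  rw [sinHalfProd, prod_eq_zero_iff]
  exact exists_congr fun k => by
    rw [sin_half_sub_eq_zero_iff (h k), eq_comm, and_iff_right (Finset.mem_univ k)]

theorem neg_one_pow_mul_sinHalfProd_pos [DecidableEq ι] {t : ι → ℝ} {x : ℝ}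
    (h : ∀ k, |x - t k| < 2 * π) (hx : ∀ k, t k ≠ x) :
    0 < (-1) ^ #{k | x < t k} * sinHalfProd t x := by
  refine neg_one_pow_card_mul_prod_pos _ _ (fun k hk => ?_) fun k hk => ?_
  · have := (mem_filter.1 hk).2
    exact sin_neg_of_neg_of_neg_pi_lt (by linarith) (by linarith [(abs_lt.1 (h k)).1])
  · have := lt_of_le_of_ne (not_lt.1 fun h' => hk (mem_filter.2 ⟨mem_univ _, h'⟩)) (hx k)
    exact sin_pos_of_pos_of_lt_pi (by linarith) (by linarith [(abs_lt.1 (h k)).2])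

theorem eq_zero_of_sinHalfProd_mul_nonpos [DecidableEq ι] {t : ι → ℝ} (ht : Injective t)
    (hsep : ∀ k l, |t k - t l| < 2 * π) {h : ℝ → ℝ} (hh : Continuous h)
    (hgh : ∀ x, sinHalfProd t x * h x ≤ 0) (k : ι) : h (t k) = 0 := by
  set R : ℝ → ℝ := fun x => ∏ l ∈ univ.erase k, sin ((x - t l) / 2)
  have hR : R (t k) ≠ 0 := prod_ne_zero_iff.2 fun l hl =>
    (sin_half_sub_eq_zero_iff (hsep k l)).not.2 (ht.ne (ne_of_mem_erase hl).symm)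
  suffices R (t k) * h (t k) = 0 from (mul_eq_zero.1 this).resolve_left hR
  -- `sinHalfProd t = sin ((· - t k) / 2) * R`, whose first factor changes sign at `t k`
  refine eq_zero_of_mul_nonpos_of_neg_of_pos (g := fun x => sin ((x - t k) / 2))
    (h := fun x => R x * h x)
    (by unfold R; fun_prop) (fun x => ?_) ?_ ?_
  · simpa [sinHalfProd, R, ← mul_prod_erase univ _ (mem_univ k), mul_assoc] using hgh x
  · filter_upwards [Ioo_mem_nhdsLT (by linarith [pi_pos] : t k - 2 * π < t k)] with x hx
    exact sin_neg_of_neg_of_neg_pi_lt (by linarith [hx.2]) (by linarith [hx.1])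
  · filter_upwards [Ioo_mem_nhdsGT (by linarith [pi_pos] : t k < t k + 2 * π)] with x hx
    exact sin_pos_of_pos_of_lt_pi (by linarith [hx.1]) (by linarith [hx.2])

end SinHalfProd

section Arcs

variable {n : ℕ} {t : Fin (n + 1) → ℝ}

theorem neg_one_pow_mul_sinHalfProd_pos_of_mem_Ioo (ht : StrictMono t)
    (htmem : ∀ k, t k ∈ Ico 0 (2 * π)) (i : Fin n) {s : ℝ}
    (hs : s ∈ Ioo (t i.castSucc) (t i.succ)) : 0 < (-1) ^ (n - i) * sinHalfProd t s := by
  have hsmem : s ∈ Ico 0 (2 * π) := ⟨(htmem _).1.trans hs.1.le, hs.2.trans (htmem _).2⟩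
  have hcmp : ∀ k, t k < s ∧ k ≤ i.castSucc ∨ s < t k ∧ i.castSucc < k := fun k => by
    rcases le_or_gt k i.castSucc with hk | hk
    · exact .inl ⟨(ht.monotone hk).trans_lt hs.1, hk⟩
    · exact .inr ⟨hs.2.trans_le (ht.monotone (Fin.castSucc_lt_iff_succ_le.1 hk)), hk⟩
  have hcount : #{k | s < t k} = n - i := by
    rw [show ({k | s < t k} : Finset _) = Finset.Ioi i.castSucc by
      ext k; rcases hcmp k with ⟨h, hk⟩ | ⟨h, hk⟩ <;> simp [h, hk, h.not_gt, hk.not_gt],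
      Fin.card_Ioi]
    simp
  rw [← hcount]
  exact neg_one_pow_mul_sinHalfProd_pos
    (fun k => abs_sub_lt_of_nonneg_of_lt hsmem.1 hsmem.2 (htmem k).1 (htmem k).2)
    fun k => by rcases hcmp k with ⟨h, -⟩ | ⟨h, -⟩; exacts [h.ne, h.ne']

theorem sinHalfProd_pos_of_mem_Ioo_last (ht : Monotone t) {s : ℝ}
    (hs : s ∈ Ioo (t (Fin.last n)) (t 0 + 2 * π)) : 0 < sinHalfProd t s :=
  prod_pos fun k _ => sin_pos_of_pos_of_lt_pi
    (by linarith [ht (Fin.le_last k), hs.1]) (by linarith [ht (Fin.zero_le k), hs.2])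

end Arcs

theorem exists_pos_sinHalfProd_mul_of_chebyshev {n : ℕ} {F : Fin n → ℝ → ℝ}
    (hF : ∀ j, Continuous (F j))
    (hcheb : ∀ c : Fin n → ℝ, c ≠ 0 →
      {x ∈ Ico 0 (2 * π) | ∑ j, c j * F j x = 0}.encard ≤ (n - 1 : ℕ))
    {t : Fin (n + 1) → ℝ} (ht : Injective t) (htmem : ∀ k, t k ∈ Ico 0 (2 * π))
    {c : Fin n → ℝ} (hc : c ≠ 0) : ∃ x, 0 < sinHalfProd t x * ∑ j, c j * F j x := by
  by_contra! hnonpos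
  have hzero : ∀ k, ∑ j, c j * F j (t k) = 0 :=
    eq_zero_of_sinHalfProd_mul_nonpos ht
      (fun k l => abs_sub_lt_of_nonneg_of_lt (htmem k).1 (htmem k).2 (htmem l).1 (htmem l).2)
      (continuous_finsetSum _ fun j _ => continuous_const.mul (hF j)) hnonpos
  have hcard : ((n + 1 : ℕ) : ℕ∞) ≤ (n - 1 : ℕ) := calc
    ((n + 1 : ℕ) : ℕ∞) = ENat.card (Fin (n + 1)) := by simp
    _ ≤ (range t).encard := ht.encard_range
    _ ≤ {x ∈ Ico 0 (2 * π) | ∑ j, c j * F j x = 0}.encard :=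
      encard_mono (range_subset_iff.2 fun k => ⟨htmem k, hzero k⟩)
    _ ≤ _ := hcheb c hc
  have := ENat.natCast_le_natCast.1 hcard
  omega

/-- Sharpness (circle case): given a Chebyshev system of odd order `n` on the circle
and points `0 ≤ t₁ < ⋯ < t_{n+1} < 2π`, there is a continuous `2π`-periodic function
whose zero set in `[0,2π)` is exactly these points, with alternating nonzero constant
sign on the `n+1` open circular arcs they determine (the last arc being the one from
`t_{n+1}` to `t₁ + 2π`), which is orthogonal (weight `1`) to the system. -/
theorem exists_orthogonal_with_prescribed_sign_changes_circle
    (n : ℕ) (hodd : Odd n) (F : Fin n → ℝ → ℝ)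
    (hFc : ∀ j, Continuous (F j))
    (hFper : ∀ j, Function.Periodic (F j) (2 * Real.pi))
    (hcheb : ∀ c : Fin n → ℝ, c ≠ 0 →
      {x ∈ Set.Ico 0 (2 * Real.pi) | ∑ j, c j * F j x = 0}.encard ≤ (n - 1 : ℕ))
    (t : Fin (n + 1) → ℝ) (ht : StrictMono t)
    (htmem : ∀ i, t i ∈ Set.Ico 0 (2 * Real.pi)) :
    ∃ f : ℝ → ℝ, Continuous f ∧ Function.Periodic f (2 * Real.pi) ∧
      (∀ s ∈ Set.Ico 0 (2 * Real.pi), (f s = 0 ↔ ∃ i, t i = s)) ∧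
      (∃ ε : ℝ, (ε = 1 ∨ ε = -1) ∧
        (∀ i : Fin n, ∀ s ∈ Set.Ioo (t i.castSucc) (t i.succ),
          0 < ε * (-1) ^ (i : ℕ) * f s) ∧
        (∀ s ∈ Set.Ioo (t (Fin.last n)) (t 0 + 2 * Real.pi),
          0 < ε * (-1) ^ n * f s)) ∧
      ∀ j, ∫ s in (0:ℝ)..(2 * Real.pi), f s * F j s = 0 := by
  have hg := continuous_sinHalfProd t
  have hgT := periodic_sinHalfProd t (by simpa using hodd.add_one)
  obtain ⟨w, hwc, hwT, hwpos, hw⟩ := exists_pos_periodic_weight_orthogonal two_pi_pos hg hgT hFc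
    hFper fun c hc => exists_pos_sinHalfProd_mul_of_chebyshev hFc hcheb ht.injective htmem hc
  refine ⟨fun s => w s * sinHalfProd t s, hwc.mul hg, hwT.mul hgT, fun s hs => ?_,
    ⟨(-1) ^ n, neg_one_pow_eq_or ℝ n, fun i s hs => ?_, fun s hs => ?_⟩, hw⟩
  · rw [mul_eq_zero, or_iff_right (hwpos s).ne', sinHalfProd_eq_zero_iff fun k =>
      abs_sub_lt_of_nonneg_of_lt hs.1 hs.2 (htmem k).1 (htmem k).2]
  · have hsign : (-1 : ℝ) ^ n * (-1) ^ (i : ℕ) = (-1) ^ (n - i) := by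
      rw [← pow_add]
      exact neg_one_pow_congr (by rw [Nat.even_add, Nat.even_sub i.is_lt.le])
    rw [hsign, mul_left_comm]
    exact mul_pos (hwpos s) (neg_one_pow_mul_sinHalfProd_pos_of_mem_Ioo ht htmem i hs)
  · rw [← pow_add, Even.neg_one_pow ⟨n, rfl⟩, one_mul]
    exact mul_pos (hwpos s) (sinHalfProd_pos_of_mem_Ioo_last ht.monotone hs)
end

section
/- (Key step of the four-vertex theorem) Let R : ℝ → ℝ be continuous, 2π-periodic and not constant, and suppose ∫_0^{2π} R(α)·cos(α) dα = 0 and ∫_0^{2π} R(α)·sin(α) dα = 0. Then R has at least 4 local extrema per period; that is, there exist four points 0 ≤ α₁ < α₂ < α₃ < α₄ < 2π each of which is a point of local maximum or of local minimum of R. (Applied to the radius of curvature of an oval as a function of the tangent angle, this yields the classical four-vertex theorem.) -/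
/-!
Let `c` be the mean of `R` and `g = R - c`. Then `g` is orthogonal over a period to `1`, `cos`
and `sin`, hence, for all `u`, `v`, to
`cos ((v - u) / 2) - cos (α - (u + v) / 2) = 2 sin ((α - u) / 2) sin ((α - v) / 2)`.
If `g`, which is positive at a maximum point `p` of `R`, were nonpositive exactly on an arc
`[u, v]` and nonnegative on the rest of the period, then `g` times this product would be
nonnegative and not identically zero, yet have zero integral. Hence `g` takes the signs
`+, -, +, -, +` at some `p < n < t < m < p + 2π`, so between `p` and `p + 2π` the function `R`
has a local minimum, a local maximum and a local minimum; together with `p` and reduced mod `2π`,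
these are the four extrema.
-/

open Real Set intervalIntegral Function

theorem exists_isLocalMin_mem_Ioo {α β : Type*} [ConditionallyCompleteLinearOrder α]
    [TopologicalSpace α] [OrderTopology α] [LinearOrder β] [TopologicalSpace β]
    [OrderClosedTopology β] {f : α → β} {a b x : α} (hf : ContinuousOn f (Icc a b))
    (hx : x ∈ Ioo a b) (ha : f x < f a) (hb : f x < f b) :
    ∃ y ∈ Ioo a b, IsLocalMin f y ∧ f y ≤ f x := by
  obtain ⟨y, hy, hmin⟩ := isCompact_Icc.exists_isMinOn (nonempty_Icc.2 (hx.1.trans hx.2).le) hf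
  have hyx : f y ≤ f x := hmin (Ioo_subset_Icc_self hx)
  have hy' : y ∈ Ioo a b :=
    ⟨hy.1.lt_of_ne (by rintro rfl; exact (hyx.trans_lt ha).false),
      hy.2.lt_of_ne (by rintro rfl; exact (hyx.trans_lt hb).false)⟩
  exact ⟨y, hy', hmin.isLocalMin (Icc_mem_nhds hy'.1 hy'.2), hyx⟩

theorem exists_isLocalMax_mem_Ioo {α β : Type*} [ConditionallyCompleteLinearOrder α]
    [TopologicalSpace α] [OrderTopology α] [LinearOrder β] [TopologicalSpace β]
    [OrderClosedTopology β] {f : α → β} {a b x : α} (hf : ContinuousOn f (Icc a b))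
    (hx : x ∈ Ioo a b) (ha : f a < f x) (hb : f b < f x) :
    ∃ y ∈ Ioo a b, IsLocalMax f y ∧ f x ≤ f y :=
  exists_isLocalMin_mem_Ioo (β := βᵒᵈ) hf hx ha hb

theorem exists_isLocalMin_isLocalMax_isLocalMin {α β : Type*}
    [ConditionallyCompleteLinearOrder α] [TopologicalSpace α] [OrderTopology α] [LinearOrder β]
    [TopologicalSpace β] [OrderClosedTopology β] {f : α → β} {a n t m e : α}
    (hf : ContinuousOn f (Icc a e)) (han : a < n) (hnt : n < t) (htm : t < m) (hme : m < e)
    (hfna : f n < f a) (hfnt : f n < f t) (hfmt : f m < f t) (hfme : f m < f e) :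
    ∃ x y z, a < x ∧ x < y ∧ y < z ∧ z < e ∧
      IsLocalMin f x ∧ IsLocalMax f y ∧ IsLocalMin f z := by
  obtain ⟨y, ⟨hny, hym⟩, hy, hty⟩ := exists_isLocalMax_mem_Ioo
    (hf.mono (Icc_subset_Icc han.le hme.le)) ⟨hnt, htm⟩ hfnt hfmt
  obtain ⟨x, ⟨hax, hxy⟩, hx, -⟩ := exists_isLocalMin_mem_Ioo
    (hf.mono (Icc_subset_Icc le_rfl (hym.trans hme).le)) ⟨han, hny⟩ hfna (hfnt.trans_le hty)
  obtain ⟨z, ⟨hyz, hze⟩, hz, -⟩ := exists_isLocalMin_mem_Ioo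
    (hf.mono (Icc_subset_Icc (han.trans hny).le le_rfl)) ⟨hym, hme⟩ (hfmt.trans_le hty) hfme
  exact ⟨x, y, z, hax, hxy, hyz, hze, hx, hy, hz⟩

theorem Function.Periodic.isLocalExtr_toIcoMod {α β : Type*} [AddCommGroup α] [LinearOrder α]
    [IsOrderedAddMonoid α] [Archimedean α] [TopologicalSpace α] [ContinuousAdd α] [Preorder β]
    {f : α → β} {T : α} (hf : Periodic f T) (hT : 0 < T) (a : α) {x : α}
    (hx : IsLocalExtr f x) : IsLocalExtr f (toIcoMod hT a x) := by
  have hshift : f ∘ (· + toIcoDiv hT a x • T) = f := funext fun y => hf.zsmul _ y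
  rw [← hshift]
  refine IsLocalExtr.comp_continuous ?_ (continuous_add_const _).continuousAt
  rwa [toIcoMod_add_toIcoDiv_zsmul]

theorem exists_strictMono_mem_Ico_zero {α : Type*} [AddCommGroup α] [LinearOrder α]
    [IsOrderedAddMonoid α] [Archimedean α] {T a : α} (hT : 0 < T) {P : α → Prop}
    (hP : ∀ x, P x → P (toIcoMod hT 0 x)) {n : ℕ} {x : Fin n → α} (hx : Injective x)
    (hxa : ∀ i, x i ∈ Ico a (a + T)) (hxP : ∀ i, P (x i)) :
    ∃ A : Fin n → α, StrictMono A ∧ ∀ i, A i ∈ Ico 0 T ∧ P (A i) := by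
  have hinj : Injective (toIcoMod hT 0 ∘ x) := by
    intro i j hij
    apply hx
    rw [← (toIcoMod_eq_self hT).2 (hxa i), ← (toIcoMod_eq_self hT).2 (hxa j),
      ← toIcoMod_toIcoMod hT a 0, ← toIcoMod_toIcoMod hT a 0 (x j)]
    exact congrArg _ hij
  set s := Finset.univ.image (toIcoMod hT 0 ∘ x)
  have hs : s.card = n := by rw [Finset.card_image_of_injective _ hinj, Finset.card_fin]
  refine ⟨s.orderEmbOfFin hs, (s.orderEmbOfFin hs).strictMono, fun i => ?_⟩
  obtain ⟨j, -, hj⟩ := Finset.mem_image.1 (s.orderEmbOfFin_mem hs i)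
  rw [← hj]
  exact ⟨toIcoMod_mem_Ico' hT _, hP _ (hxP j)⟩

theorem Function.Periodic.exists_forall_le_and_integral_lt_mul {f : ℝ → ℝ} {T : ℝ}
    (hper : Periodic f T) (hf : Continuous f) (hT : 0 < T) (hnc : ∃ x y, f x ≠ f y) :
    ∃ p, (∀ x, f x ≤ f p) ∧ ∫ x in (0:ℝ)..T, f x < T * f p := by
  obtain ⟨_, ⟨p, rfl⟩, hmax⟩ :=
    (hper.compact_of_continuous hT.ne' hf).exists_isGreatest (range_nonempty f)
  have hle : ∀ x, f x ≤ f p := fun x => hmax ⟨x, rfl⟩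
  obtain ⟨z, hz⟩ : ∃ z, f z < f p := by
    obtain ⟨x, y, hxy⟩ := hnc
    by_contra! h
    exact hxy (((hle x).antisymm (h x)).trans ((hle y).antisymm (h y)).symm)
  obtain ⟨y, hy, hyz⟩ := hper.exists_mem_Ico₀ hT z
  refine ⟨p, hle, ?_⟩
  calc ∫ x in (0:ℝ)..T, f x < ∫ _ in (0:ℝ)..T, f p :=
        integral_lt_integral_of_continuousOn_of_le_of_exists_lt hT hf.continuousOn
          continuousOn_const (fun x _ => hle x) ⟨y, Ico_subset_Icc_self hy, hyz ▸ hz⟩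
    _ = T * f p := by rw [integral_const, sub_zero, smul_eq_mul]

theorem integral_cos_sub_eq_zero (m : ℝ) : ∫ α in (0:ℝ)..2 * π, cos (α - m) = 0 := by
  rw [integral_comp_sub_right (fun x => cos x), integral_cos, zero_sub,
    show 2 * π - m = -m + 2 * π by ring, sin_add_two_pi, sub_self]

theorem integral_mul_cos_sub_eq_zero {f : ℝ → ℝ} (hf : Continuous f)
    (hcos : ∫ α in (0:ℝ)..2 * π, f α * cos α = 0)
    (hsin : ∫ α in (0:ℝ)..2 * π, f α * sin α = 0)
    (m : ℝ) : ∫ α in (0:ℝ)..2 * π, f α * cos (α - m) = 0 := by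
  have hexpand : ∀ α, f α * cos (α - m) = f α * cos α * cos m + f α * sin α * sin m :=
    fun α => by rw [cos_sub]; ring
  simp_rw [hexpand]
  rw [integral_add, integral_mul_const, integral_mul_const, hcos, hsin]
  · ring
  all_goals exact ((hf.mul (by fun_prop)).mul continuous_const).intervalIntegrable _ _

theorem integral_sub_const_mul_cos_sub_eq_zero {f : ℝ → ℝ} (hf : Continuous f)
    (hcos : ∫ α in (0:ℝ)..2 * π, f α * cos α = 0)
    (hsin : ∫ α in (0:ℝ)..2 * π, f α * sin α = 0)
    (c m : ℝ) : ∫ α in (0:ℝ)..2 * π, (f α - c) * cos (α - m) = 0 := by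
  simp_rw [sub_mul]
  rw [integral_sub, integral_const_mul, integral_mul_cos_sub_eq_zero hf hcos hsin,
    integral_cos_sub_eq_zero, mul_zero, sub_zero]
  all_goals exact Continuous.intervalIntegrable (by fun_prop) _ _

theorem sin_half_mul_sin_half (α u v : ℝ) :
    sin ((α - u) / 2) * sin ((α - v) / 2) = (cos ((v - u) / 2) - cos (α - (u + v) / 2)) / 2 := by
  rw [cos_sub_cos, show ((v - u) / 2 + (α - (u + v) / 2)) / 2 = (α - u) / 2 by ring,
    show ((v - u) / 2 - (α - (u + v) / 2)) / 2 = -((α - v) / 2) by ring, sin_neg]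
  ring

theorem integral_mul_sin_half_mul_sin_half_eq_zero {g : ℝ → ℝ} (hg : Continuous g)
    (hper : Periodic g (2 * π)) (h0 : ∫ α in (0:ℝ)..2 * π, g α = 0)
    (h1 : ∀ m, ∫ α in (0:ℝ)..2 * π, g α * cos (α - m) = 0) (u v : ℝ) :
    ∫ α in u..u + 2 * π, g α * (sin ((α - u) / 2) * sin ((α - v) / 2)) = 0 := by
  have hexpand : ∀ α, g α * (sin ((α - u) / 2) * sin ((α - v) / 2))
      = cos ((v - u) / 2) / 2 * g α - g α * cos (α - (u + v) / 2) / 2 := fun α => by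
    rw [sin_half_mul_sin_half]; ring
  have hperiodic : Periodic (fun α => cos ((v - u) / 2) / 2 * g α
      - g α * cos (α - (u + v) / 2) / 2) (2 * π) := fun α => by
    simp only [hper α, add_sub_right_comm α, cos_add_two_pi]
  simp_rw [hexpand]
  rw [hperiodic.intervalIntegral_add_eq u 0, zero_add, integral_sub, integral_const_mul,
    integral_div, h0, h1]
  · ring
  all_goals exact Continuous.intervalIntegrable (by fun_prop) _ _

theorem false_of_nonpos_on_Icc_of_nonneg_on_Ioo {g : ℝ → ℝ} (hg : Continuous g)
    (hper : Periodic g (2 * π)) (h0 : ∫ α in (0:ℝ)..2 * π, g α = 0)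
    (h1 : ∀ m, ∫ α in (0:ℝ)..2 * π, g α * cos (α - m) = 0) {u v x : ℝ} (huv : u ≤ v)
    (hvx : v < x) (hxu : x < u + 2 * π) (hneg : ∀ t ∈ Icc u v, g t ≤ 0)
    (hpos : ∀ t ∈ Ioo v (u + 2 * π), 0 ≤ g t) (hx : 0 < g x) : False := by
  set s : ℝ → ℝ := fun α => sin ((α - u) / 2) * sin ((α - v) / 2) with hs
  have hs_nonpos : ∀ t ∈ Icc u v, s t ≤ 0 := fun t ht =>
    mul_nonpos_of_nonneg_of_nonpos
      (sin_nonneg_of_nonneg_of_le_pi (by linarith [ht.1]) (by linarith [ht.2]))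
      (sin_nonpos_of_nonpos_of_neg_pi_le (by linarith [ht.2]) (by linarith [ht.1]))
  have hs_pos : ∀ t ∈ Ioo v (u + 2 * π), 0 < s t := fun t ht =>
    mul_pos (sin_pos_of_pos_of_lt_pi (by linarith [ht.1]) (by linarith [ht.2]))
      (sin_pos_of_pos_of_lt_pi (by linarith [ht.1]) (by linarith [ht.2]))
  have hs_end : s (u + 2 * π) = 0 := by
    simp only [hs, show (u + 2 * π - u) / 2 = π by ring, sin_pi, zero_mul]
  have hnonneg : ∀ t ∈ Ioc u (u + 2 * π), 0 ≤ g t * s t := by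
    intro t ⟨hut, htu⟩
    rcases le_or_gt t v with htv | hvt
    · exact mul_nonneg_of_nonpos_of_nonpos (hneg t ⟨hut.le, htv⟩)
        (hs_nonpos t ⟨hut.le, htv⟩)
    rcases htu.lt_or_eq with htu | rfl
    · exact mul_nonneg (hpos t ⟨hvt, htu⟩) (hs_pos t ⟨hvt, htu⟩).le
    · rw [hs_end, mul_zero]
  have hint_pos : 0 < ∫ α in u..u + 2 * π, g α * s α :=
    integral_pos (by linarith) (by fun_prop) hnonneg
      ⟨x, ⟨by linarith, hxu.le⟩, mul_pos hx (hs_pos x ⟨hvx, hxu⟩)⟩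
  exact hint_pos.ne' (integral_mul_sin_half_mul_sin_half_eq_zero hg hper h0 h1 u v)

theorem exists_neg_pos_neg_of_pos {g : ℝ → ℝ} (hg : Continuous g)
    (hper : Periodic g (2 * π)) (h0 : ∫ α in (0:ℝ)..2 * π, g α = 0)
    (h1 : ∀ m, ∫ α in (0:ℝ)..2 * π, g α * cos (α - m) = 0) {p : ℝ} (hp : 0 < g p) :
    ∃ n t m, p < n ∧ n < t ∧ t < m ∧ m < p + 2 * π ∧
      g n < 0 ∧ 0 < g t ∧ g m < 0 := by
  set N := {t | t ∈ Icc p (p + 2 * π) ∧ g t < 0}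
  have hN : N.Nonempty := by
    by_contra hN
    have hint : 0 < ∫ α in p..p + 2 * π, g α :=
      integral_pos (by linarith [two_pi_pos]) hg.continuousOn
        (fun t ht => not_lt.1 fun h => hN ⟨t, Ioc_subset_Icc_self ht, h⟩)
        ⟨p, left_mem_Icc.2 (by linarith [two_pi_pos]), hp⟩
    rw [hper.intervalIntegral_add_eq p 0, zero_add, h0] at hint
    exact hint.false
  have hbelow : BddBelow N := ⟨p, fun t ht => ht.1.1⟩
  have habove : BddAbove N := ⟨p + 2 * π, fun t ht => ht.1.2⟩
  have hclosure : closure N ⊆ {t | t ∈ Icc p (p + 2 * π) ∧ g t ≤ 0} :=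
    closure_minimal (fun t ht => ⟨ht.1, ht.2.le⟩)
      (isClosed_Icc.inter (isClosed_le hg continuous_const))
  obtain ⟨⟨hpu, -⟩, hu⟩ := hclosure (csInf_mem_closure hN hbelow)
  obtain ⟨⟨-, hvp⟩, hv⟩ := hclosure (csSup_mem_closure hN habove)
  replace hpu : p < sInf N := hpu.lt_of_ne (ne_of_apply_ne g (hu.trans_lt hp).ne')
  replace hvp : sSup N < p + 2 * π :=
    hvp.lt_of_ne (ne_of_apply_ne g (by rw [hper]; exact (hv.trans_lt hp).ne))
  have huv : sInf N ≤ sSup N := csInf_le_csSup hN hbelow habove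
  by_contra! hcon
  refine false_of_nonpos_on_Icc_of_nonneg_on_Ioo hg hper h0 h1 huv hvp (by linarith) ?_ ?_
    (x := p + 2 * π) (by rwa [hper])
  · intro t ⟨hut, htv⟩
    by_contra! ht
    obtain ⟨n, hnN, hnt⟩ :=
      exists_lt_of_csInf_lt hN (hut.lt_of_ne (ne_of_apply_ne g (hu.trans_lt ht).ne))
    obtain ⟨m, hmN, htm⟩ :=
      exists_lt_of_lt_csSup hN (htv.lt_of_ne (ne_of_apply_ne g (hv.trans_lt ht).ne'))
    have hgm := hcon n t m (hpu.trans_le (csInf_le hbelow hnN)) hnt htm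
      ((le_csSup habove hmN).trans_lt hvp) hnN.2 ht
    linarith [hmN.2]
  · intro t ⟨hvt, htu⟩
    by_contra! ht
    rcases le_or_gt t (p + 2 * π) with htp | hpt
    · linarith [le_csSup habove ⟨⟨by linarith, htp⟩, ht⟩]
    · have hmem : t - 2 * π ∈ N :=
        ⟨⟨by linarith, by linarith⟩, by rwa [← hper, sub_add_cancel]⟩
      linarith [csInf_le hbelow hmem]

/-- Key step of the four-vertex theorem: a continuous `2π`-periodic nonconstant
function `R` whose first harmonics vanish has at least four local extrema per
period. -/
theorem four_extrema_of_vanishing_first_harmonics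
    (R : ℝ → ℝ) (hc : Continuous R) (hper : Function.Periodic R (2 * Real.pi))
    (hnc : ∃ x y, R x ≠ R y)
    (hcos : ∫ α in (0:ℝ)..(2 * Real.pi), R α * Real.cos α = 0)
    (hsin : ∫ α in (0:ℝ)..(2 * Real.pi), R α * Real.sin α = 0) :
    ∃ A : Fin 4 → ℝ, StrictMono A ∧ (∀ i, A i ∈ Set.Ico 0 (2 * Real.pi)) ∧
      ∀ i, IsLocalMax R (A i) ∨ IsLocalMin R (A i) := by
  set c := (∫ α in (0:ℝ)..2 * π, R α) / (2 * π)
  have h0 : ∫ α in (0:ℝ)..2 * π, (R α - c) = 0 := by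
    rw [integral_sub (hc.intervalIntegrable _ _) intervalIntegrable_const, integral_const,
      sub_zero, smul_eq_mul, mul_div_cancel₀ _ two_pi_pos.ne', sub_self]
  obtain ⟨p, hle, hint⟩ := hper.exists_forall_le_and_integral_lt_mul hc two_pi_pos hnc
  have hcp : c < R p := (div_lt_iff₀' two_pi_pos).2 hint
  obtain ⟨n, t, m, hpn, hnt, htm, hmp, hgn, hgt, hgm⟩ :=
    exists_neg_pos_neg_of_pos (g := fun α => R α - c) (hc.sub continuous_const)
      (fun α => congrArg (· - c) (hper α)) h0
      (integral_sub_const_mul_cos_sub_eq_zero hc hcos hsin c) (sub_pos.2 hcp)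
  obtain ⟨x, y, z, hpx, hxy, hyz, hzp, hx, hy, hz⟩ :=
    exists_isLocalMin_isLocalMax_isLocalMin hc.continuousOn hpn hnt htm hmp (by linarith)
      (by linarith) (by linarith) (by rw [hper]; linarith)
  obtain ⟨A, hA, hAmem⟩ := exists_strictMono_mem_Ico_zero two_pi_pos (P := IsLocalExtr R)
    (fun _ h => hper.isLocalExtr_toIcoMod two_pi_pos 0 h) (a := p) (x := ![p, x, y, z])
    (StrictMono.injective
      (by simp [Fin.strictMono_iff_lt_succ, Fin.forall_fin_succ, hpx, hxy, hyz]))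
    (by intro i; fin_cases i <;> constructor <;> simp <;> linarith [two_pi_pos])
    (by intro i; fin_cases i
        exacts [((isMaxOn_univ_iff.2 hle).isLocalMax Filter.univ_mem).isExtr, hx.isExtr, hy.isExtr,
          hz.isExtr])
  exact ⟨A, hA, fun i => (hAmem i).1, fun i => (hAmem i).2.symm⟩
end

section
/- (Aleksandrov's lemma, vector form) Let k ≥ 3 and let 0 ≤ θ₁ < θ₂ < ⋯ < θ_k < 2π, and set u_i = (cos θ_i, sin θ_i) ∈ ℝ². Let a₁, …, a_k and b₁, …, b_k be positive real numbers with (a₁, …, a_k) ≠ (b₁, …, b_k), representing the side lengths of two convex polygons with parallel corresponding sides, i.e., ∑_{i=1}^k a_i·u_i = 0 and ∑_{i=1}^k b_i·u_i = 0, and suppose the perimeters are equal: ∑_i a_i = ∑_i b_i. Then the cyclic sequence (a₁ − b₁, …, a_k − b_k) changes sign at least 4 times cyclically. -/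
open Real Finset

private lemma alek_cos_ge {x ρ : ℝ} (h1 : |x| ≤ ρ) (h2 : ρ ≤ π) :
    Real.cos ρ ≤ Real.cos x := by
  rw [← Real.cos_abs x]
  exact Real.cos_le_cos_of_nonneg_of_le_pi (abs_nonneg x) h2 h1

private lemma alek_cos_lt {x ρ : ℝ} (h0 : 0 ≤ ρ) (h1 : ρ < |x|) (h2 : |x| < 2 * π - ρ) :
    Real.cos x < Real.cos ρ := by
  rw [← Real.cos_abs x]
  rcases le_or_gt (|x|) π with h | h
  · exact Real.cos_lt_cos_of_nonneg_of_le_pi h0 h h1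
  · have he : Real.cos (|x|) = Real.cos (2 * π - |x|) := by
      rw [Real.cos_sub, Real.cos_two_pi, Real.sin_two_pi]; ring
    rw [he]
    have hπ := Real.pi_pos
    exact Real.cos_lt_cos_of_nonneg_of_le_pi h0 (by linarith) (by linarith)

private lemma alek_key (k : ℕ) (θ : Fin k → ℝ) (hθ : StrictMono θ)
    (hθmem : ∀ i, θ i ∈ Set.Ico 0 (2 * Real.pi))
    (h : Fin k → ℝ)
    (hc : ∑ i, h i * Real.cos (θ i) = 0)
    (hs : ∑ i, h i * Real.sin (θ i) = 0)
    (h0 : ∑ i, h i = 0)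
    (hcontig : ∀ i j l : Fin k, i < j → j < l → h i < 0 → 0 < h j → h l < 0 → False)
    (hexp : ∃ i, 0 < h i) (hexn : ∃ i, h i < 0) : False := by
  classical
  have hπ := Real.pi_pos
  set S : Finset (Fin k) := Finset.univ.filter (fun i => h i < 0) with hSdef
  have hS : S.Nonempty := by
    obtain ⟨i, hi⟩ := hexn
    exact ⟨i, by simp [hSdef, hi]⟩
  set i₀ := S.min' hS with hi₀def
  set i₁ := S.max' hS with hi₁def
  have hi₀neg : h i₀ < 0 := by
    have := S.min'_mem hS; simp [hSdef] at this; exact this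
  have hi₁neg : h i₁ < 0 := by
    have := S.max'_mem hS; simp [hSdef] at this; exact this
  set α := θ i₀ with hαdef
  set β := θ i₁ with hβdef
  have hαβ : α ≤ β := hθ.monotone (S.min'_le _ (S.max'_mem hS))
  have hα0 : 0 ≤ α := (hθmem i₀).1
  have hβ2π : β < 2 * π := (hθmem i₁).2
  set μ := (α + β) / 2 with hμdef
  set ρ := (β - α) / 2 with hρdef
  have hρ0 : 0 ≤ ρ := by rw [hρdef]; linarith
  have hρπ : ρ ≤ π := by rw [hρdef]; linarith
  have hsum0 : ∑ i, h i * (Real.cos (θ i - μ) - Real.cos ρ) = 0 := by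
    have heq : ∀ i : Fin k, h i * (Real.cos (θ i - μ) - Real.cos ρ) =
        (h i * Real.cos (θ i)) * Real.cos μ + (h i * Real.sin (θ i)) * Real.sin μ
          - h i * Real.cos ρ := by
      intro i; rw [Real.cos_sub]; ring
    calc ∑ i, h i * (Real.cos (θ i - μ) - Real.cos ρ)
        = ∑ i, ((h i * Real.cos (θ i)) * Real.cos μ
            + (h i * Real.sin (θ i)) * Real.sin μ - h i * Real.cos ρ) :=
          Finset.sum_congr rfl (fun i _ => heq i)
      _ = (∑ i, h i * Real.cos (θ i)) * Real.cos μ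
            + (∑ i, h i * Real.sin (θ i)) * Real.sin μ - (∑ i, h i) * Real.cos ρ := by
          rw [Finset.sum_sub_distrib, Finset.sum_add_distrib, Finset.sum_mul,
            Finset.sum_mul, Finset.sum_mul]
      _ = 0 := by rw [hc, hs, h0]; ring
  have hposcase : ∀ i : Fin k, 0 < h i →
      h i * (Real.cos (θ i - μ) - Real.cos ρ) < 0 := by
    intro i hi
    have houtside : θ i < α ∨ β < θ i := by
      by_contra hcc
      push_neg at hcc
      have h1 : i₀ ≤ i := by
        by_contra hlt
        push_neg at hlt
        exact absurd (hθ hlt) (by linarith [hcc.1])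
      have h2 : i ≤ i₁ := by
        by_contra hlt
        push_neg at hlt
        exact absurd (hθ hlt) (by linarith [hcc.2])
      have h1' : i₀ < i := lt_of_le_of_ne h1 (by rintro rfl; linarith)
      have h2' : i < i₁ := lt_of_le_of_ne h2 (by rintro rfl; linarith)
      exact hcontig i₀ i i₁ h1' h2' hi₀neg hi hi₁neg
    have hθi0 : 0 ≤ θ i := (hθmem i).1
    have hθi2π : θ i < 2 * π := (hθmem i).2
    have h1 : ρ < |θ i - μ| ∧ |θ i - μ| < 2 * π - ρ := by
      rcases houtside with hlt | hgt
      · have hx : θ i - μ < 0 := by rw [hμdef]; linarith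
        rw [abs_of_neg hx]
        constructor <;> rw [hμdef, hρdef] <;> linarith
      · have hx : 0 < θ i - μ := by rw [hμdef]; linarith
        rw [abs_of_pos hx]
        constructor <;> rw [hμdef, hρdef] <;> linarith
    have := alek_cos_lt hρ0 h1.1 h1.2
    nlinarith
  have hle : ∀ i : Fin k, h i * (Real.cos (θ i - μ) - Real.cos ρ) ≤ 0 := by
    intro i
    rcases lt_trichotomy (h i) 0 with hi | hi | hi
    · have hiS : i ∈ S := by simp [hSdef, hi]
      have h1 : α ≤ θ i := hθ.monotone (S.min'_le _ hiS)
      have h2 : θ i ≤ β := hθ.monotone (S.le_max' _ hiS)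
      have habs : |θ i - μ| ≤ ρ := by
        rw [abs_le]
        constructor <;> rw [hμdef, hρdef] <;> linarith
      have := alek_cos_ge habs hρπ
      nlinarith
    · simp [hi]
    · exact le_of_lt (hposcase i hi)
  obtain ⟨p, hp⟩ := hexp
  have : ∑ i, h i * (Real.cos (θ i - μ) - Real.cos ρ) < 0 := by
    calc ∑ i, h i * (Real.cos (θ i - μ) - Real.cos ρ)
        < ∑ _i : Fin k, (0 : ℝ) :=
          Finset.sum_lt_sum (fun i _ => hle i) ⟨p, Finset.mem_univ p, hposcase p hp⟩
      _ = 0 := by simp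
  linarith [hsum0]

/-- Aleksandrov's lemma (vector form): if two convex polygons with parallel
corresponding sides, given by side lengths `a_i, b_i > 0` in the directions
`u_i = (cos θ_i, sin θ_i)`, are distinct but have equal perimeters, then the cyclic
sequence of differences of side lengths changes sign at least four times
cyclically. -/
theorem aleksandrov_lemma
    (k : ℕ) (hk : 3 ≤ k) (θ : Fin k → ℝ) (hθ : StrictMono θ)
    (hθmem : ∀ i, θ i ∈ Set.Ico 0 (2 * Real.pi))
    (a b : Fin k → ℝ) (hapos : ∀ i, 0 < a i) (hbpos : ∀ i, 0 < b i)
    (hne : a ≠ b)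
    (hsuma : ∑ i, a i • ((Real.cos (θ i), Real.sin (θ i)) : ℝ × ℝ) = 0)
    (hsumb : ∑ i, b i • ((Real.cos (θ i), Real.sin (θ i)) : ℝ × ℝ) = 0)
    (hperim : ∑ i, a i = ∑ i, b i) :
    ∃ m : Fin 4 → Fin k, StrictMono m ∧
      (∀ j : Fin 3,
        (a (m j.castSucc) - b (m j.castSucc)) * (a (m j.succ) - b (m j.succ)) < 0) ∧
      (a (m 3) - b (m 3)) * (a (m 0) - b (m 0)) < 0 := by
  classical
  set h : Fin k → ℝ := fun i => a i - b i with hhdef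
  have hc : ∑ i, h i * Real.cos (θ i) = 0 := by
    have ha := congrArg Prod.fst hsuma
    have hb := congrArg Prod.fst hsumb
    simp [Prod.fst_sum] at ha hb
    simp [hhdef, sub_mul, Finset.sum_sub_distrib, ha, hb]
  have hs : ∑ i, h i * Real.sin (θ i) = 0 := by
    have ha := congrArg Prod.snd hsuma
    have hb := congrArg Prod.snd hsumb
    simp [Prod.snd_sum] at ha hb
    simp [hhdef, sub_mul, Finset.sum_sub_distrib, ha, hb]
  have h0 : ∑ i, h i = 0 := by
    simp [hhdef, Finset.sum_sub_distrib, hperim]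
  have hne' : ∃ i, h i ≠ 0 := by
    by_contra hcc
    push_neg at hcc
    exact hne (funext fun i => by have := hcc i; simpa [hhdef, sub_eq_zero] using this)
  have hexp : ∃ i, 0 < h i := by
    by_contra hcc
    push_neg at hcc
    obtain ⟨i, hi⟩ := hne'
    have hi' : h i < 0 := lt_of_le_of_ne (hcc i) hi
    have : ∑ j, h j < 0 := by
      calc ∑ j, h j < ∑ _j : Fin k, (0:ℝ) :=
            Finset.sum_lt_sum (fun j _ => hcc j) ⟨i, Finset.mem_univ i, hi'⟩
        _ = 0 := by simp
    linarith
  have hexn : ∃ i, h i < 0 := by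
    by_contra hcc
    push_neg at hcc
    obtain ⟨i, hi⟩ := hexp
    have : (0:ℝ) < ∑ j, h j := by
      calc (0:ℝ) = ∑ _j : Fin k, (0:ℝ) := by simp
        _ < ∑ j, h j :=
            Finset.sum_lt_sum (fun j _ => hcc j) ⟨i, Finset.mem_univ i, hi⟩
    linarith
  by_contra hcon
  push_neg at hcon
  have noquad : ∀ w x y z : Fin k, w < x → x < y → y < z →
      h w * h x < 0 → h x * h y < 0 → h y * h z < 0 → h z * h w < 0 → False := by
    intro w x y z hwx hxy hyz p1 p2 p3 p4
    have hm : StrictMono (![w, x, y, z] : Fin 4 → Fin k) := by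
      rw [Fin.strictMono_iff_lt_succ]
      intro i
      fin_cases i <;> simpa using (by assumption : _)
    have hprod : ∀ j : Fin 3,
        (a (![w, x, y, z] j.castSucc) - b (![w, x, y, z] j.castSucc)) *
          (a (![w, x, y, z] j.succ) - b (![w, x, y, z] j.succ)) < 0 := by
      intro j
      fin_cases j
      · exact p1
      · exact p2
      · exact p3
    have hfin := hcon ![w, x, y, z] hm hprod
    exact absurd p4 (not_lt.2 hfin)
  have hcases : (∀ i j l : Fin k, i < j → j < l → h i < 0 → 0 < h j → h l < 0 → False) ∨
      (∀ i j l : Fin k, i < j → j < l → 0 < h i → h j < 0 → 0 < h l → False) := by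
    by_contra hcc
    push_neg at hcc
    obtain ⟨H1, H2⟩ := hcc
    obtain ⟨i, j, l, hij, hjl, hi, hj, hl, -⟩ := H1
    obtain ⟨p, q, r, hpq, hqr, hp, hq, hr, -⟩ := H2
    rcases lt_trichotomy j q with hlt | heq | hgt
    · exact noquad i j q r hij hlt hqr
        (mul_neg_of_neg_of_pos hi hj) (mul_neg_of_pos_of_neg hj hq)
        (mul_neg_of_neg_of_pos hq hr) (mul_neg_of_pos_of_neg hr hi)
    · subst heq; linarith
    · exact noquad p q j l hpq hgt hjl
        (mul_neg_of_pos_of_neg hp hq) (mul_neg_of_neg_of_pos hq hj)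
        (mul_neg_of_pos_of_neg hj hl) (mul_neg_of_neg_of_pos hl hp)
  rcases hcases with hcontig | hcontig
  · exact alek_key k θ hθ hθmem h hc hs h0 hcontig hexp hexn
  · refine alek_key k θ hθ hθmem (fun i => -h i) ?_ ?_ ?_ ?_ ?_ ?_
    · simp only [neg_mul, Finset.sum_neg_distrib, hc, neg_zero]
    · simp only [neg_mul, Finset.sum_neg_distrib, hs, neg_zero]
    · simp only [Finset.sum_neg_distrib, h0, neg_zero]
    · intro i j l hij hjl hi hj hl
      have hi' : -h i < 0 := hi
      have hj' : 0 < -h j := hj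
      have hl' : -h l < 0 := hl
      exact hcontig i j l hij hjl (by linarith) (by linarith) (by linarith)
    · obtain ⟨i, hi⟩ := hexn; exact ⟨i, show 0 < -h i by linarith⟩
    · obtain ⟨i, hi⟩ := hexp; exact ⟨i, show -h i < 0 by linarith⟩
end

section
/- Let 0 < a < b and let f : (a,b) → ℝ be a continuous function such that t ↦ f(t)/t is strictly monotone on (a,b). Then, for every n ≥ 1, the n+1 functions g_k(t) = t^{n−k}·f(t)^k, k = 0, 1, …, n (the restrictions to the graph curve t ↦ (t, f(t)) of the homogeneous polynomials of degree n in two variables), form a Chebyshev system of order n+1 on (a,b); that is, for every tuple of real constants (c₀, c₁, …, c_n) ≠ 0 the function t ↦ ∑_{k=0}^n c_k·t^{n−k}·f(t)^k has at most n zeros in (a,b). -/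
/-!
Substituting `x = f t / t` turns `∑ c_k t^(n-k) f(t)^k` into `t^n · P(x)` with
`P = ∑ c_k X^k` a nonzero polynomial of degree at most `n`. Since `t ↦ f t / t` is injective on
`(a,b)`, distinct zeros of the combination give distinct roots of `P`, of which there are at most
`n`.
-/

open Polynomial Set

namespace Polynomial

theorem eval_ofFn {R : Type*} [CommSemiring R] [DecidableEq R] (n : ℕ) (v : Fin n → R) (x : R) :
    (ofFn n v).eval x = ∑ i : Fin n, v i * x ^ (i : ℕ) := by
  simp [ofFn_eq_sum_monomial, eval_finsetSum]

theorem ofFn_ne_zero {R : Type*} [Semiring R] [DecidableEq R] {n : ℕ} {v : Fin n → R}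
    (hv : v ≠ 0) : ofFn n v ≠ 0 :=
  (map_ne_zero_iff _ (injective_ofFn n)).mpr hv

theorem encard_setOf_eval_comp_eq_zero_le {α R : Type*} [CommRing R] [IsDomain R] {p : R[X]}
    (hp : p ≠ 0) {r : α → R} {S : Set α} (hr : InjOn r S) :
    {t ∈ S | p.eval (r t) = 0}.encard ≤ p.natDegree := by
  classical
  calc {t ∈ S | p.eval (r t) = 0}.encard
      = (r '' {t ∈ S | p.eval (r t) = 0}).encard := ((hr.mono (sep_subset _ _)).encard_image).symm
    _ ≤ (p.roots.toFinset : Set R).encard :=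
      encard_mono (by rintro _ ⟨t, ⟨-, ht⟩, rfl⟩; simp [hp, ht])
    _ = p.roots.toFinset.card := encard_coe_eq_coe_finsetCard _
    _ ≤ p.natDegree := by exact_mod_cast (Multiset.toFinset_card_le _).trans p.card_roots'

end Polynomial

theorem sum_mul_pow_sub_mul_pow_eq_pow_mul_eval {K : Type*} [Field K] [DecidableEq K] (n : ℕ)
    (c : Fin (n + 1) → K) {t : K} (ht : t ≠ 0) (y : K) :
    ∑ k : Fin (n + 1), c k * t ^ (n - (k : ℕ)) * y ^ (k : ℕ) =
      t ^ n * (ofFn (n + 1) c).eval (y / t) := by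
  rw [eval_ofFn, Finset.mul_sum]
  refine Finset.sum_congr rfl fun k _ => ?_
  have htn : t ^ n = t ^ (n - (k : ℕ)) * t ^ (k : ℕ) := by
    rw [← pow_add, Nat.sub_add_cancel (Nat.lt_succ_iff.mp k.isLt)]
  rw [htn, div_pow]
  field_simp

theorem homogeneous_chebyshev_on_graph_general
    (a b : ℝ) (ha : 0 < a) (f : ℝ → ℝ)
    (hmono : StrictMonoOn (fun t => f t / t) (Set.Ioo a b) ∨
      StrictAntiOn (fun t => f t / t) (Set.Ioo a b))
    (n : ℕ) :
    ∀ c : Fin (n + 1) → ℝ, c ≠ 0 →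
      {t ∈ Set.Ioo a b |
        ∑ k : Fin (n + 1), c k * t ^ (n - (k : ℕ)) * f t ^ (k : ℕ) = 0}.encard ≤ n := by
  intro c hc
  have hinj : InjOn (fun t => f t / t) (Ioo a b) := hmono.elim StrictMonoOn.injOn StrictAntiOn.injOn
  have hzeros : {t ∈ Ioo a b | ∑ k : Fin (n + 1), c k * t ^ (n - (k : ℕ)) * f t ^ (k : ℕ) = 0} =
      {t ∈ Ioo a b | (ofFn (n + 1) c).eval (f t / t) = 0} := by
    ext t
    refine and_congr_right fun ht => ?_
    have ht0 : t ≠ 0 := (ha.trans ht.1).ne'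
    rw [sum_mul_pow_sub_mul_pow_eq_pow_mul_eval n c ht0, mul_eq_zero,
      or_iff_right (pow_ne_zero n ht0)]
  calc _ = {t ∈ Ioo a b | (ofFn (n + 1) c).eval (f t / t) = 0}.encard := by rw [hzeros]
    _ ≤ (ofFn (n + 1) c).natDegree := encard_setOf_eval_comp_eq_zero_le (ofFn_ne_zero hc) hinj
    _ ≤ n := by exact_mod_cast Nat.lt_succ_iff.mp (ofFn_natDegree_lt n.succ_pos c)

/-- If `f` is continuous on `(a,b)` with `0 < a < b` and `t ↦ f(t)/t` is strictly
monotone there, then for every `n ≥ 1` the functions `t^(n-k)·f(t)^k`, `k = 0, …, n`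
(restrictions to the graph of `f` of the degree-`n` homogeneous polynomials in two
variables), form a Chebyshev system of order `n+1` on `(a,b)`: every nontrivial
linear combination has at most `n` zeros in `(a,b)`. -/
theorem homogeneous_chebyshev_on_graph
    (a b : ℝ) (ha : 0 < a) (hab : a < b) (f : ℝ → ℝ)
    (hf : ContinuousOn f (Set.Ioo a b))
    (hmono : StrictMonoOn (fun t => f t / t) (Set.Ioo a b) ∨
      StrictAntiOn (fun t => f t / t) (Set.Ioo a b))
    (n : ℕ) (hn : 1 ≤ n) :
    ∀ c : Fin (n + 1) → ℝ, c ≠ 0 →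
      {t ∈ Set.Ioo a b |
        ∑ k : Fin (n + 1), c k * t ^ (n - (k : ℕ)) * f t ^ (k : ℕ) = 0}.encard ≤ n :=
  homogeneous_chebyshev_on_graph_general a b ha f hmono n
end
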